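/- arXiv:2111.05747 — 4 statements merged into one kernel-verified Lean document; each statement's English description precedes it below -/
import Mathlib

section
/- (Stokes' theorem for graphs.) Let (Σ,∂Σ) be a weighted metric graph with boundary. For every ω∈A^{1,0}(Σ,∂Σ) one has ∫_Σ d''ω = ∫_{∂Σ} ω, and for every η∈A^{0,1}(Σ,∂Σ) one has ∫_Σ d'η = ∫_{∂Σ} η. -/
open scoped Classical

noncomputable section

/-! ## Weighted metric graphs with boundary -/

/-- A weighted metric graph with boundary `(Σ, ∂Σ)`: a finite multigraph without loop
edges, given by its set of *oriented* edges `E` with an orientation-reversal involution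
`rev`, source (tail) map `src`, positive edge lengths `len`, positive integer weights
`wt` (both invariant under reversal), and a distinguished set `bdry` of vertices. -/
structure WMG where
  V : Type
  E : Type
  fintV : Fintype V
  fintE : Fintype E
  decV : DecidableEq V
  decE : DecidableEq E
  rev : E → E
  rev_rev : ∀ e, rev (rev e) = e
  rev_ne : ∀ e, rev e ≠ e
  src : E → V
  no_loop : ∀ e, src (rev e) ≠ src e
  len : E → ℝ
  len_pos : ∀ e, 0 < len e
  len_rev : ∀ e, len (rev e) = len e
  wt : E → ℕ
  wt_pos : ∀ e, 0 < wt e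
  wt_rev : ∀ e, wt (rev e) = wt e
  bdry : Finset V

attribute [instance] WMG.fintV WMG.fintE WMG.decV WMG.decE

namespace WMG

/-- The head vertex `e⁺` of an oriented edge. -/
def head (G : WMG) (e : G.E) : G.V := G.src (G.rev e)

/-- The parameter interval `[0, ℓ(e)]` of an edge. -/
abbrev IccE (G : WMG) (e : G.E) : Set ℝ := Set.Icc 0 (G.len e)

/-- The outgoing (oriented) edges at a vertex. -/
def outE (G : WMG) (v : G.V) : Finset G.E := Finset.univ.filter (fun e => G.src e = v)

/-- The incoming (oriented) edges at a vertex. -/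
def inE (G : WMG) (v : G.V) : Finset G.E := Finset.univ.filter (fun e => G.head e = v)

/-- The valency of a vertex = number of outgoing oriented edges. -/
def val (G : WMG) (v : G.V) : ℕ := (G.outE v).card

/-- Adjacency via an oriented edge. -/
def Adj (G : WMG) : G.V → G.V → Prop := fun u v => ∃ e, G.src e = u ∧ G.head e = v

/-- The graph is connected (and nonempty). -/
def Connected (G : WMG) : Prop :=
  Nonempty G.V ∧ ∀ u v : G.V, Relation.ReflTransGen G.Adj u v

/-- The genus `#E⁺(Σ) - #V(Σ) + 1` (number of unoriented edges minus vertices plus one),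
as an integer. -/
def genusZ (G : WMG) : ℤ :=
  (Fintype.card G.E : ℤ) / 2 - (Fintype.card G.V : ℤ) + 1

/-- The number of connected components of the graph. -/
def numComp (G : WMG) : ℕ := Nat.card (Quot G.Adj)

/-- Smoothness matching condition at a valency-two vertex: the pair `(g₁, g₂)` of
functions on the outgoing edges `e₁, e₂` (in the edge parameters) is smooth at the common
tail vertex iff `w(e₁)ⁿ g₁⁽ⁿ⁾(0) = (-1)ⁿ w(e₂)ⁿ g₂⁽ⁿ⁾(0)` for all `n ≥ 0`
(one-sided derivatives). -/
def SmoothPairAt (G : WMG) (e₁ e₂ : G.E) (g₁ g₂ : ℝ → ℝ) : Prop :=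
  ∀ n : ℕ, (G.wt e₁ : ℝ) ^ n * iteratedDerivWithin n g₁ (G.IccE e₁) 0
    = (-1 : ℝ) ^ n * (G.wt e₂ : ℝ) ^ n * iteratedDerivWithin n g₂ (G.IccE e₂) 0

end WMG

/-! ## Smooth forms on graphs, differentials, products, integrals -/

/-- Coefficient data of a `(1,0)`-, `(0,1)`- or `(1,1)`-form: a function on each
(oriented) edge, in the edge parameter.  Only the values on `[0, ℓ(e)]` are relevant;
we normalize coefficients to vanish outside this interval. -/
abbrev Coeff (G : WMG) : Type := (e : G.E) → ℝ → ℝ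

/-- Coefficient data of a `(0,0)`-form (a function on the graph): functions on the
edges together with values at the vertices. -/
abbrev Coeff0 (G : WMG) : Type := ((e : G.E) → ℝ → ℝ) × (G.V → ℝ)

namespace WMG

/-- `F` is a smooth function on `(Σ, ∂Σ)`, i.e. an element of `A^{0,0}(Σ, ∂Σ)`:
smooth on each edge, compatible with edge reversal and with the vertex values
(hence continuous), and at each interior vertex: constant near valency-one vertices,
the smooth-matching condition at valency-two vertices, and the vanishing of the
weighted sum of outgoing derivatives at vertices of valency `> 2`. -/
def IsA00 (G : WMG) (F : Coeff0 G) : Prop :=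
  (∀ e, ContDiffOn ℝ (⊤ : ℕ∞) (F.1 e) (G.IccE e)) ∧
  (∀ e, ∀ x : ℝ, x ∉ G.IccE e → F.1 e x = 0) ∧
  (∀ e, ∀ x ∈ G.IccE e, F.1 (G.rev e) (G.len e - x) = F.1 e x) ∧
  (∀ e, F.1 e 0 = F.2 (G.src e)) ∧
  (∀ e, G.src e ∉ G.bdry → G.val (G.src e) = 1 →
    ∃ ε > 0, ∀ x ∈ G.IccE e, x < ε → F.1 e x = F.1 e 0) ∧
  (∀ e₁ e₂, e₁ ≠ e₂ → G.src e₂ = G.src e₁ → G.src e₁ ∉ G.bdry → G.val (G.src e₁) = 2 →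
    G.SmoothPairAt e₁ e₂ (F.1 e₁) (F.1 e₂)) ∧
  (∀ v : G.V, v ∉ G.bdry → 2 < G.val v →
    ∑ e ∈ G.outE v, (G.wt e : ℝ) * derivWithin (F.1 e) (G.IccE e) 0 = 0)

/-- `f` is a smooth `(1,0)`-form `(f_e d't_e)` (equivalently, a `(0,1)`-form
`(f_e d''t_e)`) on `(Σ, ∂Σ)`: `f_{ē} = -f_e`, with the paper's conditions at interior
vertices: vanishing near valency-one vertices, smoothness of
`(w(e₁) f_{e₁}, -w(e₂) f_{e₂})` at valency-two vertices, and
`∑_{e⁻ = v} w(e) f_e(v) = 0` at vertices of valency `> 2`. -/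
def IsA1 (G : WMG) (f : Coeff G) : Prop :=
  (∀ e, ContDiffOn ℝ (⊤ : ℕ∞) (f e) (G.IccE e)) ∧
  (∀ e, ∀ x : ℝ, x ∉ G.IccE e → f e x = 0) ∧
  (∀ e, ∀ x ∈ G.IccE e, f (G.rev e) (G.len e - x) = - f e x) ∧
  (∀ e, G.src e ∉ G.bdry → G.val (G.src e) = 1 →
    ∃ ε > 0, ∀ x ∈ G.IccE e, x < ε → f e x = 0) ∧
  (∀ e₁ e₂, e₁ ≠ e₂ → G.src e₂ = G.src e₁ → G.src e₁ ∉ G.bdry → G.val (G.src e₁) = 2 →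
    G.SmoothPairAt e₁ e₂ (fun x => (G.wt e₁ : ℝ) * f e₁ x)
      (fun x => -((G.wt e₂ : ℝ) * f e₂ x))) ∧
  (∀ v : G.V, v ∉ G.bdry → 2 < G.val v →
    ∑ e ∈ G.outE v, (G.wt e : ℝ) * f e 0 = 0)

/-- `f` is a smooth `(1,1)`-form `(f_e d't_e d''t_e)` on `(Σ, ∂Σ)`: `f_{ē} = f_e`,
vanishing near interior valency-one vertices, and smoothness of
`(w(e₁)² f_{e₁}, w(e₂)² f_{e₂})` at interior valency-two vertices. -/
def IsA11 (G : WMG) (f : Coeff G) : Prop :=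
  (∀ e, ContDiffOn ℝ (⊤ : ℕ∞) (f e) (G.IccE e)) ∧
  (∀ e, ∀ x : ℝ, x ∉ G.IccE e → f e x = 0) ∧
  (∀ e, ∀ x ∈ G.IccE e, f (G.rev e) (G.len e - x) = f e x) ∧
  (∀ e, G.src e ∉ G.bdry → G.val (G.src e) = 1 →
    ∃ ε > 0, ∀ x ∈ G.IccE e, x < ε → f e x = 0) ∧
  (∀ e₁ e₂, e₁ ≠ e₂ → G.src e₂ = G.src e₁ → G.src e₁ ∉ G.bdry → G.val (G.src e₁) = 2 →
    G.SmoothPairAt e₁ e₂ (fun x => (G.wt e₁ : ℝ) ^ 2 * f e₁ x)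
      (fun x => (G.wt e₂ : ℝ) ^ 2 * f e₂ x))

end WMG

/-- The differentials `d' , d''` on functions: `d''f = ((df/dt_e) d''t_e)` and
`d'f = ((df/dt_e) d't_e)` have the same coefficients (one-sided derivatives at the
endpoints, truncated to `[0, ℓ(e)]`). -/
def dd0 (G : WMG) (F : Coeff0 G) : Coeff G :=
  fun e x => if x ∈ G.IccE e then derivWithin (F.1 e) (G.IccE e) x else 0

/-- The differential `d''` on `(1,0)`-forms: `d''(f_e d't_e) = (-(df_e/dt_e) d't_e d''t_e)`. -/
def dd10 (G : WMG) (f : Coeff G) : Coeff G :=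
  fun e x => if x ∈ G.IccE e then -derivWithin (f e) (G.IccE e) x else 0

/-- The differential `d'` on `(0,1)`-forms: `d'(f_e d''t_e) = ((df_e/dt_e) d't_e d''t_e)`. -/
def dd01 (G : WMG) (f : Coeff G) : Coeff G :=
  fun e x => if x ∈ G.IccE e then derivWithin (f e) (G.IccE e) x else 0

/-- Product of two functions (in `A^{0,0}`). -/
def mul00 {G : WMG} (F F' : Coeff0 G) : Coeff0 G :=
  (fun e x => F.1 e x * F'.1 e x, fun v => F.2 v * F'.2 v)

/-- Module action of functions on `(p,q)`-forms. -/
def smul00 {G : WMG} (F : Coeff0 G) (f : Coeff G) : Coeff G :=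
  fun e x => F.1 e x * f e x

/-- Wedge product `(f_e d't_e) ∧ (g_e d''t_e) = (f_e g_e d't_e d''t_e)`. -/
def wedge {G : WMG} (f g : Coeff G) : Coeff G := fun e x => f e x * g e x

/-- `∫_Σ ω = (1/2) ∑_{oriented e} w(e) ∫₀^{ℓ(e)} f_e(t_e(x)) dx` for a `(1,1)`-form. -/
def integ11 (G : WMG) (f : Coeff G) : ℝ :=
  (1 / 2) * ∑ e : G.E, (G.wt e : ℝ) * ∫ x in (0 : ℝ)..(G.len e), f e x

/-- `∫_{∂Σ} η' = ∑_{v ∈ ∂Σ} ∑_{e⁻ = v} w(e) f_e(v)` for a `(1,0)`-form. -/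
def integBd10 (G : WMG) (f : Coeff G) : ℝ :=
  ∑ v ∈ G.bdry, ∑ e ∈ G.outE v, (G.wt e : ℝ) * f e 0

/-- `∫_{∂Σ} η'' = ∑_{v ∈ ∂Σ} ∑_{e⁺ = v} w(e) g_e(v)` for a `(0,1)`-form. -/
def integBd01 (G : WMG) (f : Coeff G) : ℝ :=
  ∑ v ∈ G.bdry, ∑ e ∈ G.inE v, (G.wt e : ℝ) * f e (G.len e)

section StokesAux

variable (G : WMG)

lemma WMG.zero_mem_IccE (e : G.E) : (0 : ℝ) ∈ G.IccE e :=
  ⟨le_refl 0, (G.len_pos e).le⟩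

lemma WMG.len_mem_IccE (e : G.E) : G.len e ∈ G.IccE e :=
  ⟨(G.len_pos e).le, le_refl _⟩

/-- FTC on a single edge. -/
lemma WMG.ftc (e : G.E) (f : ℝ → ℝ) (hf : ContDiffOn ℝ (⊤ : ℕ∞) f (G.IccE e)) :
    ∫ x in (0:ℝ)..(G.len e), derivWithin f (G.IccE e) x = f (G.len e) - f 0 := by
  have hl := G.len_pos e
  apply intervalIntegral.integral_eq_sub_of_hasDeriv_right_of_le hl.le hf.continuousOn
  · intro x hx
    have hd : DifferentiableWithinAt ℝ f (G.IccE e) x :=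
      (hf.differentiableOn (by simp)) x (Set.Ioo_subset_Icc_self hx)
    exact ((hd.hasDerivWithinAt).hasDerivAt
      (Icc_mem_nhds hx.1 hx.2)).hasDerivWithinAt
  · have hc : ContinuousOn (derivWithin f (G.IccE e)) (G.IccE e) :=
      (hf.derivWithin (m := (⊤ : ℕ∞)) (uniqueDiffOn_Icc hl) (by simp)).continuousOn
    exact (by rwa [Set.uIcc_of_le hl.le] :
      ContinuousOn (derivWithin f (G.IccE e)) (Set.uIcc 0 (G.len e))).intervalIntegrable

/-- The value at the head endpoint in terms of the reversed edge. -/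
lemma WMG.val_len_eq (f : Coeff G)
    (h : ∀ e, ∀ x ∈ G.IccE e, f (G.rev e) (G.len e - x) = - f e x) (e : G.E) :
    f e (G.len e) = - f (G.rev e) 0 := by
  have := h e (G.len e) (G.len_mem_IccE e)
  simp only [sub_self] at this
  linarith

lemma WMG.mem_outE {v : G.V} {e : G.E} : e ∈ G.outE v ↔ G.src e = v := by
  simp [WMG.outE]

lemma WMG.mem_inE {v : G.V} {e : G.E} : e ∈ G.inE v ↔ G.head e = v := by
  simp [WMG.inE]

/-- At an interior vertex, the weighted sum of outgoing values vanishes. -/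
lemma WMG.interior_sum (f : Coeff G) (hf : G.IsA1 f) (v : G.V) (hv : v ∉ G.bdry) :
    ∑ e ∈ G.outE v, (G.wt e : ℝ) * f e 0 = 0 := by
  obtain ⟨hsm, hz, hrev, h1, h2, h3⟩ := hf
  rcases Nat.lt_or_ge (G.val v) 3 with h | h
  · interval_cases hval : (G.val v)
    · rw [Finset.card_eq_zero.mp hval]; simp
    · obtain ⟨e, he⟩ := Finset.card_eq_one.mp hval
      have hev : G.src e = v := G.mem_outE.mp (he ▸ Finset.mem_singleton_self e)
      obtain ⟨ε, hε, hε'⟩ := h1 e (by rwa [hev]) (by rw [hev, hval])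
      rw [he, Finset.sum_singleton, hε' 0 (G.zero_mem_IccE e) hε, mul_zero]
    · obtain ⟨e₁, e₂, hne, he⟩ := Finset.card_eq_two.mp hval
      have h1v : G.src e₁ = v := G.mem_outE.mp (he ▸ by simp)
      have h2v : G.src e₂ = v := G.mem_outE.mp (he ▸ by simp)
      have hs := h2 e₁ e₂ hne (by rw [h1v, h2v]) (by rwa [h1v]) (by rw [h1v, hval]) 0
      simp only [pow_zero, one_mul, iteratedDerivWithin_zero] at hs
      rw [he, Finset.sum_pair hne]
      linarith
  · exact h3 v hv h

/-- Weighted sum of tail values over all oriented edges equals the boundary integral. -/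
lemma WMG.total_sum (f : Coeff G) (hf : G.IsA1 f) :
    ∑ e : G.E, (G.wt e : ℝ) * f e 0 = integBd10 G f := by
  have hfib : ∑ v : G.V, ∑ e ∈ G.outE v, (G.wt e : ℝ) * f e 0
      = ∑ e : G.E, (G.wt e : ℝ) * f e 0 := by
    exact Finset.sum_fiberwise_of_maps_to (fun e _ => Finset.mem_univ (G.src e)) _
  rw [← hfib, integBd10]
  refine (Finset.sum_subset (Finset.subset_univ G.bdry) ?_).symm
  intro v _ hv
  exact G.interior_sum f hf v hv

/-- The reversal permutation of oriented edges. -/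
def WMG.revPerm : Equiv.Perm G.E := ⟨G.rev, G.rev, G.rev_rev, G.rev_rev⟩

lemma WMG.inE_eq_image (v : G.V) : G.inE v = (G.outE v).image G.rev := by
  ext e
  simp only [Finset.mem_image, G.mem_inE, G.mem_outE, WMG.head]
  constructor
  · intro h; exact ⟨G.rev e, h, G.rev_rev e⟩
  · rintro ⟨a, ha, rfl⟩; rwa [G.rev_rev]

lemma WMG.inE_sum (f : Coeff G)
    (h : ∀ e, ∀ x ∈ G.IccE e, f (G.rev e) (G.len e - x) = - f e x) (v : G.V) :
    ∑ e ∈ G.inE v, (G.wt e : ℝ) * f e (G.len e)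
      = -∑ e ∈ G.outE v, (G.wt e : ℝ) * f e 0 := by
  rw [G.inE_eq_image v, Finset.sum_image
    (fun a _ b _ hab => G.rev_rev a ▸ G.rev_rev b ▸ congrArg G.rev hab),
    ← Finset.sum_neg_distrib]
  refine Finset.sum_congr rfl fun e _ => ?_
  have h0 := h e 0 (G.zero_mem_IccE e)
  rw [sub_zero] at h0
  rw [G.wt_rev, G.len_rev, h0]
  ring

/-- Weighted sum of head values over all oriented edges equals `∫_{∂Σ}` of a `(0,1)`-form. -/
lemma WMG.total_sum' (f : Coeff G) (hf : G.IsA1 f) :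
    ∑ e : G.E, (G.wt e : ℝ) * f e (G.len e) = integBd01 G f := by
  have hfib : ∑ v : G.V, ∑ e ∈ G.inE v, (G.wt e : ℝ) * f e (G.len e)
      = ∑ e : G.E, (G.wt e : ℝ) * f e (G.len e) := by
    simpa [WMG.inE] using
      Finset.sum_fiberwise_of_maps_to (g := G.head) (fun e _ => Finset.mem_univ (G.head e))
        (fun e => (G.wt e : ℝ) * f e (G.len e))
  rw [← hfib, integBd01]
  refine (Finset.sum_subset (Finset.subset_univ G.bdry) ?_).symm
  intro v _ hv
  rw [G.inE_sum f hf.2.2.1 v, G.interior_sum f hf v hv, neg_zero]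

end StokesAux

/-! **Statement 1.** (Stokes' theorem for graphs.)  Let `(Σ, ∂Σ)` be a weighted metric
graph with boundary.  For every `ω ∈ A^{1,0}(Σ,∂Σ)` one has `∫_Σ d''ω = ∫_{∂Σ} ω`, and
for every `η ∈ A^{0,1}(Σ,∂Σ)` one has `∫_Σ d'η = ∫_{∂Σ} η`. -/
theorem stokes_theorem_for_graphs (G : WMG) :
    (∀ ω : Coeff G, G.IsA1 ω → integ11 G (dd10 G ω) = integBd10 G ω) ∧
    (∀ η : Coeff G, G.IsA1 η → integ11 G (dd01 G η) = integBd01 G η) := by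
  constructor
  · intro ω hω
    have key : ∀ e : G.E, (∫ x in (0:ℝ)..(G.len e), dd10 G ω e x)
        = ω e 0 + ω (G.rev e) 0 := by
      intro e
      have hcg : (∫ x in (0:ℝ)..(G.len e), dd10 G ω e x)
          = ∫ x in (0:ℝ)..(G.len e), -derivWithin (ω e) (G.IccE e) x := by
        refine intervalIntegral.integral_congr fun x hx => ?_
        rw [Set.uIcc_of_le (G.len_pos e).le] at hx
        simp [dd10, hx]
      rw [hcg, intervalIntegral.integral_neg, G.ftc e (ω e) (hω.1 e),
        G.val_len_eq ω hω.2.2.1 e]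
      ring
    rw [integ11]
    have hsum : ∑ e : G.E, (G.wt e : ℝ) * ∫ x in (0:ℝ)..(G.len e), dd10 G ω e x
        = ∑ e : G.E, ((G.wt e : ℝ) * ω e 0
            + (G.wt (G.rev e) : ℝ) * ω (G.rev e) 0) := by
      refine Finset.sum_congr rfl fun e _ => ?_
      rw [key e, G.wt_rev]; ring
    have hrw : ∑ e : G.E, (G.wt (G.rev e) : ℝ) * ω (G.rev e) 0
        = ∑ e : G.E, (G.wt e : ℝ) * ω e 0 :=
      Equiv.sum_comp (G.revPerm) fun e => (G.wt e : ℝ) * ω e 0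
    rw [hsum, Finset.sum_add_distrib, hrw, ← G.total_sum ω hω]
    ring
  · intro η hη
    have key : ∀ e : G.E, (∫ x in (0:ℝ)..(G.len e), dd01 G η e x)
        = η e (G.len e) + η (G.rev e) (G.len (G.rev e)) := by
      intro e
      have hcg : (∫ x in (0:ℝ)..(G.len e), dd01 G η e x)
          = ∫ x in (0:ℝ)..(G.len e), derivWithin (η e) (G.IccE e) x := by
        refine intervalIntegral.integral_congr fun x hx => ?_
        rw [Set.uIcc_of_le (G.len_pos e).le] at hx
        simp [dd01, hx]
      have h0 := hη.2.2.1 e 0 (G.zero_mem_IccE e)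
      rw [sub_zero] at h0
      rw [hcg, G.ftc e (η e) (hη.1 e), G.len_rev, h0]
      ring
    rw [integ11]
    have hsum : ∑ e : G.E, (G.wt e : ℝ) * ∫ x in (0:ℝ)..(G.len e), dd01 G η e x
        = ∑ e : G.E, ((G.wt e : ℝ) * η e (G.len e)
            + (G.wt (G.rev e) : ℝ) * η (G.rev e) (G.len (G.rev e))) := by
      refine Finset.sum_congr rfl fun e _ => ?_
      rw [key e, G.wt_rev]; ring
    have hrw : ∑ e : G.E, (G.wt (G.rev e) : ℝ) * η (G.rev e) (G.len (G.rev e))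
        = ∑ e : G.E, (G.wt e : ℝ) * η e (G.len e) :=
      Equiv.sum_comp (G.revPerm) fun e => (G.wt e : ℝ) * η e (G.len e)
    rw [hsum, Finset.sum_add_distrib, hrw, ← G.total_sum' η hη]
    ring
end
end

section
/- Let (Σ,∂Σ) be a weighted metric graph with boundary and Σ₀ its unweighting. The maps ν*(f)=f on A^{0,0}, ν*(f_e d't_e)=(w(e)·f_e d't_{0,e}) on A^{1,0}, ν*(f_e d''t_e)=(w(e)·f_e d''t_{0,e}) on A^{0,1}, and ν*(f_e d't_e d''t_e)=(w(e)²·f_e d't_{0,e} d''t_{0,e}) on A^{1,1} define an isomorphism of differential bigraded ℝ-algebras ν*: A^{•,•}(Σ,∂Σ) → A^{•,•}(Σ₀,∂Σ₀), i.e. ν* is a bijective ℝ-algebra homomorphism in each bidegree that commutes with d', d'' and with the wedge product. -/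
open scoped Classical
open Set

noncomputable section

/-! ## Unweighting -/

namespace WMG

/-- The unweighting `Σ₀` of `Σ`: same underlying graph, trivial weights, edge lengths
`ℓ₀(e) = ℓ(e)/w(e)`, parameterizations `t_{0,e}(x) = t_e(w(e)·x)`, same boundary. -/
def unweight (G : WMG) : WMG where
  V := G.V
  E := G.E
  fintV := G.fintV
  fintE := G.fintE
  decV := G.decV
  decE := G.decE
  rev := G.rev
  rev_rev := G.rev_rev
  rev_ne := G.rev_ne
  src := G.src
  no_loop := G.no_loop
  len := fun e => G.len e / (G.wt e : ℝ)
  len_pos := fun e => div_pos (G.len_pos e) (by exact_mod_cast G.wt_pos e)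
  len_rev := fun e => by show G.len (G.rev e) / (G.wt (G.rev e) : ℝ) = G.len e / (G.wt e : ℝ); rw [G.len_rev, G.wt_rev]
  wt := fun _ => 1
  wt_pos := fun _ => one_pos
  wt_rev := fun _ => rfl
  bdry := G.bdry

end WMG

/-- The comparison map `ν*` on functions: `ν*(f) = f`, i.e. in coordinates
`(ν*f)_e(x) = f_e(w(e)·x)` with the same vertex values. -/
def nu00 (G : WMG) (F : Coeff0 G) : Coeff0 G.unweight :=
  (fun e x => F.1 e ((G.wt e : ℝ) * x), F.2)

/-- The comparison map `ν*` on `(1,0)`- and `(0,1)`-forms: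
`ν*(f_e d't_e) = (w(e) f_e d't_{0,e})`. -/
def nu1 (G : WMG) (f : Coeff G) : Coeff G.unweight :=
  fun e x => (G.wt e : ℝ) * f e ((G.wt e : ℝ) * x)

/-- The comparison map `ν*` on `(1,1)`-forms:
`ν*(f_e d't_e d''t_e) = (w(e)² f_e d't_{0,e} d''t_{0,e})`. -/
def nu11 (G : WMG) (f : Coeff G) : Coeff G.unweight :=
  fun e x => (G.wt e : ℝ) ^ 2 * f e ((G.wt e : ℝ) * x)


/-! ### Auxiliary scaling lemmas -/

section Scale


variable {f : ℝ → ℝ} {c L L' : ℝ}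

lemma mapsTo_scale (hc : 0 < c) (hLL : L = c * L') :
    MapsTo (fun y => c * y) (Icc 0 L') (Icc 0 L) := by
  intro y hy
  subst hLL
  exact ⟨mul_nonneg hc.le hy.1, mul_le_mul_of_nonneg_left hy.2 hc.le⟩

lemma mem_scale_iff (hc : 0 < c) (hLL : L = c * L') {x : ℝ} :
    c * x ∈ Icc 0 L ↔ x ∈ Icc 0 L' := by
  subst hLL
  constructor
  · rintro ⟨h1, h2⟩
    exact ⟨nonneg_of_mul_nonneg_right h1 hc, le_of_mul_le_mul_left h2 hc⟩
  · exact fun hy => ⟨mul_nonneg hc.le hy.1, mul_le_mul_of_nonneg_left hy.2 hc.le⟩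

lemma contDiffOn_scale (hc : 0 < c) (hLL : L = c * L')
    (hf : ContDiffOn ℝ (⊤ : ℕ∞) f (Icc 0 L)) :
    ContDiffOn ℝ (⊤ : ℕ∞) (fun y => f (c * y)) (Icc 0 L') :=
  hf.comp ((contDiff_const.mul contDiff_id).contDiffOn) (mapsTo_scale hc hLL)

lemma derivWithin_scale (hc : 0 < c) (hL' : 0 < L') (hLL : L = c * L')
    (hf : DifferentiableOn ℝ f (Icc 0 L)) {x : ℝ} (hx : x ∈ Icc 0 L') :
    derivWithin (fun y => f (c * y)) (Icc 0 L') x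
      = c * derivWithin f (Icc 0 L) (c * x) := by
  have hud : UniqueDiffWithinAt ℝ (Icc 0 L') x :=
    (uniqueDiffOn_Icc hL').uniqueDiffWithinAt hx
  have h1 : derivWithin (f ∘ fun y => c * y) (Icc 0 L') x
      = derivWithin f (Icc 0 L) (c * x) * derivWithin (fun y => c * y) (Icc 0 L') x :=
    derivWithin_comp x (hf _ (mapsTo_scale hc hLL hx))
      (((differentiable_id.const_mul c) x).differentiableWithinAt) (mapsTo_scale hc hLL)
  have h2 : derivWithin (fun y => c * y) (Icc 0 L') x = c := by
    have := (((hasDerivAt_id x).const_mul c).hasDerivWithinAt).derivWithin hud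
    simpa using this
  have h1' : derivWithin (fun y => f (c * y)) (Icc 0 L') x
      = derivWithin f (Icc 0 L) (c * x) * derivWithin (fun y => c * y) (Icc 0 L') x := h1
  rw [h1', h2, mul_comm]

lemma iteratedDerivWithin_scale (hc : 0 < c) (hL' : 0 < L') (hLL : L = c * L')
    (hf : ContDiffOn ℝ (⊤ : ℕ∞) f (Icc 0 L)) (n : ℕ) {x : ℝ} (hx : x ∈ Icc 0 L') :
    iteratedDerivWithin n (fun y => f (c * y)) (Icc 0 L') x
      = c ^ n * iteratedDerivWithin n f (Icc 0 L) (c * x) := by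
  have hL : 0 < L := hLL ▸ mul_pos hc hL'
  have hud' : UniqueDiffOn ℝ (Icc 0 L') := uniqueDiffOn_Icc hL'
  have hud : UniqueDiffOn ℝ (Icc 0 L) := uniqueDiffOn_Icc hL
  induction n generalizing x with
  | zero => simp
  | succ n ih =>
    rw [iteratedDerivWithin_succ]
    have hdiff : DifferentiableOn ℝ (iteratedDerivWithin n f (Icc 0 L)) (Icc 0 L) :=
      hf.differentiableOn_iteratedDerivWithin (by exact_mod_cast lt_top_iff_ne_top.2 (by simp)) hud
    have hcongr : ∀ y ∈ Icc 0 L', iteratedDerivWithin n (fun y => f (c * y)) (Icc 0 L') y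
        = (fun y => c ^ n * iteratedDerivWithin n f (Icc 0 L) (c * y)) y := fun y hy => ih hy
    rw [derivWithin_congr hcongr (hcongr x hx)]
    have hdin : DifferentiableWithinAt ℝ (fun y => iteratedDerivWithin n f (Icc 0 L) (c * y))
        (Icc 0 L') x := by
      have := (hdiff _ (mapsTo_scale hc hLL hx)).comp x
        (((differentiable_id.const_mul c) x).differentiableWithinAt) (mapsTo_scale hc hLL)
      exact this
    rw [derivWithin_const_mul _ hdin]
    rw [derivWithin_scale hc hL' hLL hdiff hx]
    rw [iteratedDerivWithin_succ]
    ring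


lemma iter_norm {f : ℝ → ℝ} {c L L' : ℝ} (hc : 0 < c) (hL' : 0 < L') (hLL : L = c * L')
    (hf : ContDiffOn ℝ (⊤ : ℕ∞) f (Icc 0 L)) (a : ℝ) (n : ℕ) :
    iteratedDerivWithin n (fun y => a * f (c * y)) (Icc 0 L') 0
      = a * c ^ n * iteratedDerivWithin n f (Icc 0 L) 0 := by
  have h0 : (0:ℝ) ∈ Icc 0 L' := left_mem_Icc.2 hL'.le
  rw [iteratedDerivWithin_const_mul h0 (uniqueDiffOn_Icc hL') a
    (((contDiffOn_scale hc hLL hf).of_le (by exact_mod_cast le_top)) 0 h0)]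
  rw [iteratedDerivWithin_scale hc hL' hLL hf n h0]
  rw [mul_zero]; ring

lemma iter_norm_neg {f : ℝ → ℝ} {c L L' : ℝ} (hc : 0 < c) (hL' : 0 < L') (hLL : L = c * L')
    (hf : ContDiffOn ℝ (⊤ : ℕ∞) f (Icc 0 L)) (a : ℝ) (n : ℕ) :
    iteratedDerivWithin n (fun y => -(a * f (c * y))) (Icc 0 L') 0
      = -(a * c ^ n * iteratedDerivWithin n f (Icc 0 L) 0) := by
  have h0 : (0:ℝ) ∈ Icc 0 L' := left_mem_Icc.2 hL'.le
  rw [iteratedDerivWithin_fun_neg,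
    iter_norm hc hL' hLL hf a n]

lemma iter_norm0 {f : ℝ → ℝ} {L : ℝ} (hL : 0 < L)
    (hf : ContDiffOn ℝ (⊤ : ℕ∞) f (Icc 0 L)) (a : ℝ) (n : ℕ) :
    iteratedDerivWithin n (fun y => a * f y) (Icc 0 L) 0
      = a * iteratedDerivWithin n f (Icc 0 L) 0 :=
  iteratedDerivWithin_const_mul (left_mem_Icc.2 hL.le) (uniqueDiffOn_Icc hL) a
    ((hf.of_le (by exact_mod_cast le_top)) 0 (left_mem_Icc.2 hL.le))

lemma iter_norm0_neg {f : ℝ → ℝ} {L : ℝ} (hL : 0 < L)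
    (hf : ContDiffOn ℝ (⊤ : ℕ∞) f (Icc 0 L)) (a : ℝ) (n : ℕ) :
    iteratedDerivWithin n (fun y => -(a * f y)) (Icc 0 L) 0
      = -(a * iteratedDerivWithin n f (Icc 0 L) 0) := by
  rw [iteratedDerivWithin_fun_neg,
    iter_norm0 hL hf a n]

end Scale

/-! ### Structural facts about the unweighting -/

section Structural

variable (G : WMG)

lemma wt_pos' (e : G.E) : (0:ℝ) < (G.wt e : ℝ) := by exact_mod_cast G.wt_pos e

lemma wt_ne' (e : G.E) : (G.wt e : ℝ) ≠ 0 := (wt_pos' G e).ne'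

lemma unweight_len (e : G.E) : G.unweight.len e = G.len e / (G.wt e : ℝ) := rfl

lemma unweight_len_pos (e : G.E) : 0 < G.unweight.len e := G.unweight.len_pos e

lemma key (e : G.E) : G.len e = (G.wt e : ℝ) * G.unweight.len e := by
  rw [unweight_len, mul_div_assoc', mul_comm, mul_div_assoc, div_self (wt_ne' G e), mul_one]

lemma unweight_wt (e : G.E) : G.unweight.wt e = 1 := rfl

lemma unweight_wt' (e : G.unweight.E) : G.unweight.wt e = 1 := rfl

lemma unweight_src : G.unweight.src = G.src := rfl

lemma unweight_rev : G.unweight.rev = G.rev := rfl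

lemma unweight_bdry : G.unweight.bdry = G.bdry := rfl

lemma unweight_val : G.unweight.val = G.val := rfl

lemma unweight_outE : G.unweight.outE = G.outE := rfl

lemma unweight_IccE (e : G.E) : G.unweight.IccE e = Set.Icc 0 (G.unweight.len e) := rfl

end Structural

/-! ### Inverse maps -/

def inv00 (G : WMG) (H : Coeff0 G.unweight) : Coeff0 G :=
  (fun e x => H.1 e ((G.wt e : ℝ)⁻¹ * x), H.2)

def inv1 (G : WMG) (h : Coeff G.unweight) : Coeff G :=
  fun e x => (G.wt e : ℝ)⁻¹ * h e ((G.wt e : ℝ)⁻¹ * x)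

def inv11 (G : WMG) (h : Coeff G.unweight) : Coeff G :=
  fun e x => ((G.wt e : ℝ)⁻¹) ^ 2 * h e ((G.wt e : ℝ)⁻¹ * x)


/-! ### Membership lemmas -/

section Membership

variable (G : WMG)

lemma keyInv (e : G.E) : G.unweight.len e = (G.wt e : ℝ)⁻¹ * G.len e := by
  rw [key G e, inv_mul_cancel_left₀ (wt_ne' G e)]

lemma nu00_mem {F : Coeff0 G} (hF : G.IsA00 F) : G.unweight.IsA00 (nu00 G F) := by
  obtain ⟨h1, h2, h3, h4, h5, h6, h7⟩ := hF
  have hc : ∀ e : G.E, (0:ℝ) < (G.wt e : ℝ) := wt_pos' G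
  have hL' : ∀ e : G.E, 0 < G.unweight.len e := unweight_len_pos G
  have hLL : ∀ e : G.E, G.len e = (G.wt e : ℝ) * G.unweight.len e := key G
  refine ⟨?_, ?_, ?_, ?_, ?_, ?_, ?_⟩
  · exact fun e => contDiffOn_scale (hc e) (hLL e) (h1 e)
  · intro e x hx
    exact h2 e _ (fun hm => hx ((mem_scale_iff (hc e) (hLL e)).1 hm))
  · intro e x hx
    show F.1 (G.rev e) ((G.wt (G.rev e) : ℝ) * (G.unweight.len e - x)) = F.1 e ((G.wt e : ℝ) * x)
    erw [G.wt_rev]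
    have hx' : (G.wt e : ℝ) * x ∈ G.IccE e := (mem_scale_iff (hc e) (hLL e)).2 hx
    have harg : (G.wt e : ℝ) * (G.unweight.len e - x) = G.len e - (G.wt e : ℝ) * x := by
      rw [mul_sub, ← hLL e]
    have hlen0 : G.unweight.len (G.rev e) = G.unweight.len e := G.unweight.len_rev e
    rw [show G.unweight.len e - x = G.unweight.len e - x from rfl]
    calc F.1 (G.rev e) ((G.wt e : ℝ) * (G.unweight.len e - x))
        = F.1 (G.rev e) (G.len e - (G.wt e : ℝ) * x) := by rw [harg]
      _ = F.1 e ((G.wt e : ℝ) * x) := h3 e _ hx'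
  · intro e
    show F.1 e ((G.wt e : ℝ) * 0) = F.2 (G.src e)
    rw [mul_zero]; exact h4 e
  · intro e hb hv
    obtain ⟨ε, hε, hcl⟩ := h5 e hb hv
    refine ⟨ε / (G.wt e : ℝ), div_pos hε (hc e), ?_⟩
    intro x hx hxe
    show F.1 e ((G.wt e : ℝ) * x) = F.1 e ((G.wt e : ℝ) * 0)
    rw [mul_zero]
    refine hcl _ ((mem_scale_iff (hc e) (hLL e)).2 hx) ?_
    rw [mul_comm]
    exact (lt_div_iff₀ (hc e)).1 hxe
  · intro e₁ e₂ hne hsrc hb hv n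
    have hyp := h6 e₁ e₂ hne hsrc hb hv n
    show (↑(G.unweight.wt e₁) : ℝ) ^ n
        * iteratedDerivWithin n (fun x => F.1 e₁ ((G.wt e₁ : ℝ) * x)) (G.unweight.IccE e₁) 0
      = (-1:ℝ) ^ n * (↑(G.unweight.wt e₂) : ℝ) ^ n
        * iteratedDerivWithin n (fun x => F.1 e₂ ((G.wt e₂ : ℝ) * x)) (G.unweight.IccE e₂) 0
    erw [unweight_wt]
    have s1 := iteratedDerivWithin_scale (hc e₁) (hL' e₁) (hLL e₁) (h1 e₁) n
      (left_mem_Icc.2 (hL' e₁).le)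
    have s2 := iteratedDerivWithin_scale (hc e₂) (hL' e₂) (hLL e₂) (h1 e₂) n
      (left_mem_Icc.2 (hL' e₂).le)
    rw [mul_zero] at s1 s2
    rw [Nat.cast_one, one_pow, one_mul, s1, s2, hyp]
    ring
  · intro v hb hv
    have hyp := h7 v hb hv
    show ∑ e ∈ G.outE v, (↑(G.unweight.wt e) : ℝ)
        * derivWithin (fun x => F.1 e ((G.wt e : ℝ) * x)) (G.unweight.IccE e) 0 = 0
    refine Eq.trans (Finset.sum_congr rfl ?_) hyp
    intro e _
    have s1 := derivWithin_scale (hc e) (hL' e) (hLL e) ((h1 e).differentiableOn (by simp))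
      (left_mem_Icc.2 (hL' e).le)
    rw [mul_zero] at s1
    rw [unweight_wt, Nat.cast_one, one_mul, s1]

lemma inv00_mem {H : Coeff0 G.unweight} (hH : G.unweight.IsA00 H) : G.IsA00 (inv00 G H) := by
  obtain ⟨h1, h2, h3, h4, h5, h6, h7⟩ := hH
  have hc : ∀ e : G.E, (0:ℝ) < (G.wt e : ℝ)⁻¹ := fun e => inv_pos.2 (wt_pos' G e)
  have hL' : ∀ e : G.E, 0 < G.len e := G.len_pos
  have hLL : ∀ e : G.E, G.unweight.len e = (G.wt e : ℝ)⁻¹ * G.len e := keyInv G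
  refine ⟨?_, ?_, ?_, ?_, ?_, ?_, ?_⟩
  · exact fun e => contDiffOn_scale (hc e) (hLL e) (h1 e)
  · intro e x hx
    exact h2 e _ (fun hm => hx ((mem_scale_iff (hc e) (hLL e)).1 hm))
  · intro e x hx
    show H.1 (G.rev e) ((G.wt (G.rev e) : ℝ)⁻¹ * (G.len e - x)) = H.1 e ((G.wt e : ℝ)⁻¹ * x)
    rw [G.wt_rev]
    have hx' : (G.wt e : ℝ)⁻¹ * x ∈ G.unweight.IccE e := (mem_scale_iff (hc e) (hLL e)).2 hx
    have harg : (G.wt e : ℝ)⁻¹ * (G.len e - x) = G.unweight.len e - (G.wt e : ℝ)⁻¹ * x := by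
      rw [mul_sub, ← hLL e]
    rw [harg]
    exact h3 e _ hx'
  · intro e
    show H.1 e ((G.wt e : ℝ)⁻¹ * 0) = H.2 (G.src e)
    rw [mul_zero]; exact h4 e
  · intro e hb hv
    obtain ⟨ε, hε, hcl⟩ := h5 e hb hv
    refine ⟨ε * (G.wt e : ℝ), mul_pos hε (wt_pos' G e), ?_⟩
    intro x hx hxe
    show H.1 e ((G.wt e : ℝ)⁻¹ * x) = H.1 e ((G.wt e : ℝ)⁻¹ * 0)
    rw [mul_zero]
    refine hcl _ ((mem_scale_iff (hc e) (hLL e)).2 hx) ?_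
    rw [mul_comm, ← div_eq_mul_inv]
    exact (div_lt_iff₀ (wt_pos' G e)).2 hxe
  · intro e₁ e₂ hne hsrc hb hv n
    have hyp := h6 e₁ e₂ hne hsrc hb hv n
    simp only [unweight_wt, Nat.cast_one, one_pow, one_mul, mul_one] at hyp
    have s1 : iteratedDerivWithin n (fun x => H.1 e₁ ((G.wt e₁ : ℝ)⁻¹ * x)) (G.IccE e₁) 0
        = ((G.wt e₁ : ℝ)⁻¹) ^ n * iteratedDerivWithin n (H.1 e₁) (G.unweight.IccE e₁) 0 := by
      have := iteratedDerivWithin_scale (hc e₁) (hL' e₁) (hLL e₁) (h1 e₁) n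
        (left_mem_Icc.2 (hL' e₁).le)
      simpa using this
    have s2 : iteratedDerivWithin n (fun x => H.1 e₂ ((G.wt e₂ : ℝ)⁻¹ * x)) (G.IccE e₂) 0
        = ((G.wt e₂ : ℝ)⁻¹) ^ n * iteratedDerivWithin n (H.1 e₂) (G.unweight.IccE e₂) 0 := by
      have := iteratedDerivWithin_scale (hc e₂) (hL' e₂) (hLL e₂) (h1 e₂) n
        (left_mem_Icc.2 (hL' e₂).le)
      simpa using this
    show (G.wt e₁ : ℝ) ^ n
        * iteratedDerivWithin n (fun x => H.1 e₁ ((G.wt e₁ : ℝ)⁻¹ * x)) (G.IccE e₁) 0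
      = (-1:ℝ) ^ n * (G.wt e₂ : ℝ) ^ n
        * iteratedDerivWithin n (fun x => H.1 e₂ ((G.wt e₂ : ℝ)⁻¹ * x)) (G.IccE e₂) 0
    rw [s1, s2, ← mul_assoc, ← mul_pow, mul_inv_cancel₀ (wt_ne' G e₁), one_pow, one_mul, hyp]
    rw [mul_assoc, ← mul_assoc ((G.wt e₂ : ℝ) ^ n), ← mul_pow,
      mul_inv_cancel₀ (wt_ne' G e₂), one_pow, one_mul]
  · intro v hb hv
    have hyp := h7 v hb hv
    simp only [unweight_wt', Nat.cast_one, one_mul] at hyp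
    show ∑ e ∈ G.outE v, (G.wt e : ℝ)
        * derivWithin (fun x => H.1 e ((G.wt e : ℝ)⁻¹ * x)) (G.IccE e) 0 = 0
    refine Eq.trans (Finset.sum_congr rfl ?_) hyp
    intro e _
    have s1 : derivWithin (fun x => H.1 e ((G.wt e : ℝ)⁻¹ * x)) (G.IccE e) 0
        = (G.wt e : ℝ)⁻¹ * derivWithin (H.1 e) (G.unweight.IccE e) 0 := by
      have := derivWithin_scale (hc e) (hL' e) (hLL e) ((h1 e).differentiableOn (by simp))
        (left_mem_Icc.2 (hL' e).le)
      simpa using this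
    rw [s1, ← mul_assoc, mul_inv_cancel₀ (wt_ne' G e), one_mul]


lemma cancel_pow {c : ℝ} (hc : c ≠ 0) (n : ℕ) : c ^ n * (c⁻¹) ^ n = 1 := by
  rw [← mul_pow, mul_inv_cancel₀ hc, one_pow]

lemma nu1_mem {f : Coeff G} (hf : G.IsA1 f) : G.unweight.IsA1 (nu1 G f) := by
  obtain ⟨h1, h2, h3, h4, h5, h6⟩ := hf
  have hc : ∀ e : G.E, (0:ℝ) < (G.wt e : ℝ) := wt_pos' G
  have hL' : ∀ e : G.E, 0 < G.unweight.len e := unweight_len_pos G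
  have hLL : ∀ e : G.E, G.len e = (G.wt e : ℝ) * G.unweight.len e := key G
  refine ⟨?_, ?_, ?_, ?_, ?_, ?_⟩
  · exact fun e => contDiffOn_const.mul (contDiffOn_scale (hc e) (hLL e) (h1 e))
  · intro e x hx
    show (G.wt e : ℝ) * f e ((G.wt e : ℝ) * x) = 0
    rw [h2 e _ (fun hm => hx ((mem_scale_iff (hc e) (hLL e)).1 hm)), mul_zero]
  · intro e x hx
    show (G.wt (G.rev e) : ℝ) * f (G.rev e) ((G.wt (G.rev e) : ℝ) * (G.unweight.len e - x))
      = -((G.wt e : ℝ) * f e ((G.wt e : ℝ) * x))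
    erw [G.wt_rev]
    have hx' : (G.wt e : ℝ) * x ∈ G.IccE e := (mem_scale_iff (hc e) (hLL e)).2 hx
    have harg : (G.wt e : ℝ) * (G.unweight.len e - x) = G.len e - (G.wt e : ℝ) * x := by
      rw [mul_sub, ← hLL e]
    rw [harg, h3 e _ hx', mul_neg]
  · intro e hb hv
    obtain ⟨ε, hε, hcl⟩ := h4 e hb hv
    refine ⟨ε / (G.wt e : ℝ), div_pos hε (hc e), ?_⟩
    intro x hx hxe
    show (G.wt e : ℝ) * f e ((G.wt e : ℝ) * x) = 0
    rw [hcl _ ((mem_scale_iff (hc e) (hLL e)).2 hx) (by rw [mul_comm]; exact (lt_div_iff₀ (hc e)).1 hxe), mul_zero]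
  · intro e₁ e₂ hne hsrc hb hv n
    have hyp := h5 e₁ e₂ hne hsrc hb hv n
    have t1 : iteratedDerivWithin n (fun x => (G.wt e₁ : ℝ) * f e₁ x) (G.IccE e₁) 0
        = (G.wt e₁ : ℝ) * iteratedDerivWithin n (f e₁) (G.IccE e₁) 0 :=
      iter_norm0 (G.len_pos e₁) (h1 e₁) _ n
    have t2 : iteratedDerivWithin n (fun x => -((G.wt e₂ : ℝ) * f e₂ x)) (G.IccE e₂) 0
        = -((G.wt e₂ : ℝ) * iteratedDerivWithin n (f e₂) (G.IccE e₂) 0) :=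
      iter_norm0_neg (G.len_pos e₂) (h1 e₂) _ n
    rw [t1, t2] at hyp
    show (↑(G.unweight.wt e₁) : ℝ) ^ n * iteratedDerivWithin n
          (fun x => (↑(G.unweight.wt e₁) : ℝ) * ((G.wt e₁ : ℝ) * f e₁ ((G.wt e₁ : ℝ) * x)))
          (G.unweight.IccE e₁) 0
      = (-1:ℝ) ^ n * (↑(G.unweight.wt e₂) : ℝ) ^ n * iteratedDerivWithin n
          (fun x => -((↑(G.unweight.wt e₂) : ℝ) * ((G.wt e₂ : ℝ) * f e₂ ((G.wt e₂ : ℝ) * x))))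
          (G.unweight.IccE e₂) 0
    simp only [unweight_wt', Nat.cast_one, one_pow, one_mul]
    have s1 : iteratedDerivWithin n (fun x => (G.wt e₁ : ℝ) * f e₁ ((G.wt e₁ : ℝ) * x))
          (G.unweight.IccE e₁) 0
        = (G.wt e₁ : ℝ) * (G.wt e₁ : ℝ) ^ n * iteratedDerivWithin n (f e₁) (G.IccE e₁) 0 :=
      iter_norm (hc e₁) (hL' e₁) (hLL e₁) (h1 e₁) _ n
    have s2 : iteratedDerivWithin n (fun x => -((G.wt e₂ : ℝ) * f e₂ ((G.wt e₂ : ℝ) * x)))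
          (G.unweight.IccE e₂) 0
        = -((G.wt e₂ : ℝ) * (G.wt e₂ : ℝ) ^ n * iteratedDerivWithin n (f e₂) (G.IccE e₂) 0) :=
      iter_norm_neg (hc e₂) (hL' e₂) (hLL e₂) (h1 e₂) _ n
    rw [s1, s2]
    linear_combination hyp
  · intro v hb hv
    have hyp := h6 v hb hv
    show ∑ e ∈ G.outE v, (↑(G.unweight.wt e) : ℝ)
        * ((G.wt e : ℝ) * f e ((G.wt e : ℝ) * 0)) = 0
    refine Eq.trans (Finset.sum_congr rfl ?_) hyp
    intro e _
    rw [unweight_wt, Nat.cast_one, one_mul, mul_zero]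

lemma inv1_mem {h : Coeff G.unweight} (hh : G.unweight.IsA1 h) : G.IsA1 (inv1 G h) := by
  obtain ⟨h1, h2, h3, h4, h5, h6⟩ := hh
  have hc : ∀ e : G.E, (0:ℝ) < (G.wt e : ℝ)⁻¹ := fun e => inv_pos.2 (wt_pos' G e)
  have hL' : ∀ e : G.E, 0 < G.len e := G.len_pos
  have hLL : ∀ e : G.E, G.unweight.len e = (G.wt e : ℝ)⁻¹ * G.len e := keyInv G
  refine ⟨?_, ?_, ?_, ?_, ?_, ?_⟩
  · exact fun e => contDiffOn_const.mul (contDiffOn_scale (hc e) (hLL e) (h1 e))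
  · intro e x hx
    show (G.wt e : ℝ)⁻¹ * h e ((G.wt e : ℝ)⁻¹ * x) = 0
    rw [h2 e _ (fun hm => hx ((mem_scale_iff (hc e) (hLL e)).1 hm)), mul_zero]
  · intro e x hx
    show (G.wt (G.rev e) : ℝ)⁻¹ * h (G.rev e) ((G.wt (G.rev e) : ℝ)⁻¹ * (G.len e - x))
      = -((G.wt e : ℝ)⁻¹ * h e ((G.wt e : ℝ)⁻¹ * x))
    rw [G.wt_rev]
    have hx' : (G.wt e : ℝ)⁻¹ * x ∈ G.unweight.IccE e := (mem_scale_iff (hc e) (hLL e)).2 hx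
    have harg : (G.wt e : ℝ)⁻¹ * (G.len e - x) = G.unweight.len e - (G.wt e : ℝ)⁻¹ * x := by
      rw [mul_sub, ← hLL e]
    rw [harg, show h (G.rev e) (G.unweight.len e - (G.wt e : ℝ)⁻¹ * x)
      = -h e ((G.wt e : ℝ)⁻¹ * x) from h3 e _ hx', mul_neg]
  · intro e hb hv
    obtain ⟨ε, hε, hcl⟩ := h4 e hb hv
    refine ⟨ε * (G.wt e : ℝ), mul_pos hε (wt_pos' G e), ?_⟩
    intro x hx hxe
    show (G.wt e : ℝ)⁻¹ * h e ((G.wt e : ℝ)⁻¹ * x) = 0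
    rw [hcl _ ((mem_scale_iff (hc e) (hLL e)).2 hx)
      (by rw [mul_comm, ← div_eq_mul_inv]; exact (div_lt_iff₀ (wt_pos' G e)).2 hxe), mul_zero]
  · intro e₁ e₂ hne hsrc hb hv n
    have hyp := h5 e₁ e₂ hne hsrc hb hv n
    simp only [unweight_wt, Nat.cast_one, one_pow, one_mul] at hyp
    have t2 : iteratedDerivWithin n (fun x => -(h e₂ x)) (G.unweight.IccE e₂) 0
        = -iteratedDerivWithin n (h e₂) (G.unweight.IccE e₂) 0 :=
      iteratedDerivWithin_fun_neg (h e₂)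
    rw [t2] at hyp
    have hyp' : iteratedDerivWithin n (h e₁) (G.unweight.IccE e₁) 0
        = (-1:ℝ) ^ n * -iteratedDerivWithin n (h e₂) (G.unweight.IccE e₂) 0 := by
      linear_combination hyp
    show (G.wt e₁ : ℝ) ^ n * iteratedDerivWithin n
          (fun x => (G.wt e₁ : ℝ) * ((G.wt e₁ : ℝ)⁻¹ * h e₁ ((G.wt e₁ : ℝ)⁻¹ * x)))
          (G.IccE e₁) 0
      = (-1:ℝ) ^ n * (G.wt e₂ : ℝ) ^ n * iteratedDerivWithin n
          (fun x => -((G.wt e₂ : ℝ) * ((G.wt e₂ : ℝ)⁻¹ * h e₂ ((G.wt e₂ : ℝ)⁻¹ * x))))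
          (G.IccE e₂) 0
    have s1 : iteratedDerivWithin n
          (fun x => (G.wt e₁ : ℝ) * ((G.wt e₁ : ℝ)⁻¹ * h e₁ ((G.wt e₁ : ℝ)⁻¹ * x)))
          (G.IccE e₁) 0
        = (G.wt e₁ : ℝ) * ((G.wt e₁ : ℝ)⁻¹) ^ n
          * ((G.wt e₁ : ℝ)⁻¹ * iteratedDerivWithin n (h e₁) (G.unweight.IccE e₁) 0) := by
      have base := iter_norm (f := fun y => (G.wt e₁ : ℝ)⁻¹ * h e₁ y) (hc e₁) (hL' e₁) (hLL e₁)
        (contDiffOn_const.mul (h1 e₁)) (G.wt e₁ : ℝ) n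
      rw [iter_norm0 (unweight_len_pos G e₁) (h1 e₁) ((G.wt e₁ : ℝ)⁻¹) n] at base
      exact base
    have s2 : iteratedDerivWithin n
          (fun x => -((G.wt e₂ : ℝ) * ((G.wt e₂ : ℝ)⁻¹ * h e₂ ((G.wt e₂ : ℝ)⁻¹ * x))))
          (G.IccE e₂) 0
        = -((G.wt e₂ : ℝ) * ((G.wt e₂ : ℝ)⁻¹) ^ n
          * ((G.wt e₂ : ℝ)⁻¹ * iteratedDerivWithin n (h e₂) (G.unweight.IccE e₂) 0)) := by
      have base := iter_norm_neg (f := fun y => (G.wt e₂ : ℝ)⁻¹ * h e₂ y) (hc e₂) (hL' e₂)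
        (hLL e₂) (contDiffOn_const.mul (h1 e₂)) (G.wt e₂ : ℝ) n
      rw [iter_norm0 (unweight_len_pos G e₂) (h1 e₂) ((G.wt e₂ : ℝ)⁻¹) n] at base
      exact base
    rw [s1, s2]
    have c1 := cancel_pow (wt_ne' G e₁) n
    have c2 := cancel_pow (wt_ne' G e₂) n
    have d1 : (G.wt e₁ : ℝ) * (G.wt e₁ : ℝ)⁻¹ = 1 := mul_inv_cancel₀ (wt_ne' G e₁)
    have d2 : (G.wt e₂ : ℝ) * (G.wt e₂ : ℝ)⁻¹ = 1 := mul_inv_cancel₀ (wt_ne' G e₂)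
    have e1 : (G.wt e₁ : ℝ) ^ n * ((G.wt e₁ : ℝ) * ((G.wt e₁ : ℝ)⁻¹) ^ n
          * ((G.wt e₁ : ℝ)⁻¹ * iteratedDerivWithin n (h e₁) (G.unweight.IccE e₁) 0))
        = ((G.wt e₁ : ℝ) ^ n * ((G.wt e₁ : ℝ)⁻¹) ^ n) * ((G.wt e₁ : ℝ) * (G.wt e₁ : ℝ)⁻¹)
          * iteratedDerivWithin n (h e₁) (G.unweight.IccE e₁) 0 := by ring
    have e2 : (-1:ℝ) ^ n * (G.wt e₂ : ℝ) ^ n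
          * -((G.wt e₂ : ℝ) * ((G.wt e₂ : ℝ)⁻¹) ^ n
          * ((G.wt e₂ : ℝ)⁻¹ * iteratedDerivWithin n (h e₂) (G.unweight.IccE e₂) 0))
        = -(((G.wt e₂ : ℝ) ^ n * ((G.wt e₂ : ℝ)⁻¹) ^ n) * ((G.wt e₂ : ℝ) * (G.wt e₂ : ℝ)⁻¹)
          * ((-1:ℝ) ^ n * iteratedDerivWithin n (h e₂) (G.unweight.IccE e₂) 0)) := by ring
    rw [e1, e2, c1, d1, c2, d2]
    simp only [one_mul]
    rw [hyp']; ring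
  · intro v hb hv
    have hyp := h6 v hb hv
    simp only [unweight_wt', Nat.cast_one, one_mul] at hyp
    show ∑ e ∈ G.outE v, (G.wt e : ℝ)
        * ((G.wt e : ℝ)⁻¹ * h e ((G.wt e : ℝ)⁻¹ * 0)) = 0
    refine Eq.trans (Finset.sum_congr rfl ?_) hyp
    intro e _
    rw [mul_zero, ← mul_assoc, mul_inv_cancel₀ (wt_ne' G e), one_mul]


lemma nu11_mem {f : Coeff G} (hf : G.IsA11 f) : G.unweight.IsA11 (nu11 G f) := by
  obtain ⟨h1, h2, h3, h4, h5⟩ := hf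
  have hc : ∀ e : G.E, (0:ℝ) < (G.wt e : ℝ) := wt_pos' G
  have hL' : ∀ e : G.E, 0 < G.unweight.len e := unweight_len_pos G
  have hLL : ∀ e : G.E, G.len e = (G.wt e : ℝ) * G.unweight.len e := key G
  refine ⟨?_, ?_, ?_, ?_, ?_⟩
  · exact fun e => contDiffOn_const.mul (contDiffOn_scale (hc e) (hLL e) (h1 e))
  · intro e x hx
    show (G.wt e : ℝ) ^ 2 * f e ((G.wt e : ℝ) * x) = 0
    rw [h2 e _ (fun hm => hx ((mem_scale_iff (hc e) (hLL e)).1 hm)), mul_zero]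
  · intro e x hx
    show (G.wt (G.rev e) : ℝ) ^ 2 * f (G.rev e) ((G.wt (G.rev e) : ℝ) * (G.unweight.len e - x))
      = (G.wt e : ℝ) ^ 2 * f e ((G.wt e : ℝ) * x)
    erw [G.wt_rev]
    have hx' : (G.wt e : ℝ) * x ∈ G.IccE e := (mem_scale_iff (hc e) (hLL e)).2 hx
    have harg : (G.wt e : ℝ) * (G.unweight.len e - x) = G.len e - (G.wt e : ℝ) * x := by
      rw [mul_sub, ← hLL e]
    rw [harg, h3 e _ hx']
  · intro e hb hv
    obtain ⟨ε, hε, hcl⟩ := h4 e hb hv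
    refine ⟨ε / (G.wt e : ℝ), div_pos hε (hc e), ?_⟩
    intro x hx hxe
    show (G.wt e : ℝ) ^ 2 * f e ((G.wt e : ℝ) * x) = 0
    rw [hcl _ ((mem_scale_iff (hc e) (hLL e)).2 hx)
      (by rw [mul_comm]; exact (lt_div_iff₀ (hc e)).1 hxe), mul_zero]
  · intro e₁ e₂ hne hsrc hb hv n
    have hyp := h5 e₁ e₂ hne hsrc hb hv n
    have t1 : iteratedDerivWithin n (fun x => (G.wt e₁ : ℝ) ^ 2 * f e₁ x) (G.IccE e₁) 0
        = (G.wt e₁ : ℝ) ^ 2 * iteratedDerivWithin n (f e₁) (G.IccE e₁) 0 :=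
      iter_norm0 (G.len_pos e₁) (h1 e₁) _ n
    have t2 : iteratedDerivWithin n (fun x => (G.wt e₂ : ℝ) ^ 2 * f e₂ x) (G.IccE e₂) 0
        = (G.wt e₂ : ℝ) ^ 2 * iteratedDerivWithin n (f e₂) (G.IccE e₂) 0 :=
      iter_norm0 (G.len_pos e₂) (h1 e₂) _ n
    rw [t1, t2] at hyp
    show (↑(G.unweight.wt e₁) : ℝ) ^ n * iteratedDerivWithin n
          (fun x => (↑(G.unweight.wt e₁) : ℝ) ^ 2
            * ((G.wt e₁ : ℝ) ^ 2 * f e₁ ((G.wt e₁ : ℝ) * x)))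
          (G.unweight.IccE e₁) 0
      = (-1:ℝ) ^ n * (↑(G.unweight.wt e₂) : ℝ) ^ n * iteratedDerivWithin n
          (fun x => (↑(G.unweight.wt e₂) : ℝ) ^ 2
            * ((G.wt e₂ : ℝ) ^ 2 * f e₂ ((G.wt e₂ : ℝ) * x)))
          (G.unweight.IccE e₂) 0
    simp only [unweight_wt', Nat.cast_one, one_pow, one_mul]
    have s1 : iteratedDerivWithin n (fun x => (G.wt e₁ : ℝ) ^ 2 * f e₁ ((G.wt e₁ : ℝ) * x))
          (G.unweight.IccE e₁) 0
        = (G.wt e₁ : ℝ) ^ 2 * (G.wt e₁ : ℝ) ^ n * iteratedDerivWithin n (f e₁) (G.IccE e₁) 0 :=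
      iter_norm (hc e₁) (hL' e₁) (hLL e₁) (h1 e₁) _ n
    have s2 : iteratedDerivWithin n (fun x => (G.wt e₂ : ℝ) ^ 2 * f e₂ ((G.wt e₂ : ℝ) * x))
          (G.unweight.IccE e₂) 0
        = (G.wt e₂ : ℝ) ^ 2 * (G.wt e₂ : ℝ) ^ n * iteratedDerivWithin n (f e₂) (G.IccE e₂) 0 :=
      iter_norm (hc e₂) (hL' e₂) (hLL e₂) (h1 e₂) _ n
    rw [s1, s2]
    linear_combination hyp

lemma inv11_mem {h : Coeff G.unweight} (hh : G.unweight.IsA11 h) : G.IsA11 (inv11 G h) := by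
  obtain ⟨h1, h2, h3, h4, h5⟩ := hh
  have hc : ∀ e : G.E, (0:ℝ) < (G.wt e : ℝ)⁻¹ := fun e => inv_pos.2 (wt_pos' G e)
  have hL' : ∀ e : G.E, 0 < G.len e := G.len_pos
  have hLL : ∀ e : G.E, G.unweight.len e = (G.wt e : ℝ)⁻¹ * G.len e := keyInv G
  refine ⟨?_, ?_, ?_, ?_, ?_⟩
  · exact fun e => contDiffOn_const.mul (contDiffOn_scale (hc e) (hLL e) (h1 e))
  · intro e x hx
    show ((G.wt e : ℝ)⁻¹) ^ 2 * h e ((G.wt e : ℝ)⁻¹ * x) = 0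
    rw [h2 e _ (fun hm => hx ((mem_scale_iff (hc e) (hLL e)).1 hm)), mul_zero]
  · intro e x hx
    show ((G.wt (G.rev e) : ℝ)⁻¹) ^ 2 * h (G.rev e) ((G.wt (G.rev e) : ℝ)⁻¹ * (G.len e - x))
      = ((G.wt e : ℝ)⁻¹) ^ 2 * h e ((G.wt e : ℝ)⁻¹ * x)
    rw [G.wt_rev]
    have hx' : (G.wt e : ℝ)⁻¹ * x ∈ G.unweight.IccE e := (mem_scale_iff (hc e) (hLL e)).2 hx
    have harg : (G.wt e : ℝ)⁻¹ * (G.len e - x) = G.unweight.len e - (G.wt e : ℝ)⁻¹ * x := by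
      rw [mul_sub, ← hLL e]
    rw [harg, show h (G.rev e) (G.unweight.len e - (G.wt e : ℝ)⁻¹ * x)
      = h e ((G.wt e : ℝ)⁻¹ * x) from h3 e _ hx']
  · intro e hb hv
    obtain ⟨ε, hε, hcl⟩ := h4 e hb hv
    refine ⟨ε * (G.wt e : ℝ), mul_pos hε (wt_pos' G e), ?_⟩
    intro x hx hxe
    show ((G.wt e : ℝ)⁻¹) ^ 2 * h e ((G.wt e : ℝ)⁻¹ * x) = 0
    rw [hcl _ ((mem_scale_iff (hc e) (hLL e)).2 hx)
      (by rw [mul_comm, ← div_eq_mul_inv]; exact (div_lt_iff₀ (wt_pos' G e)).2 hxe), mul_zero]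
  · intro e₁ e₂ hne hsrc hb hv n
    have hyp := h5 e₁ e₂ hne hsrc hb hv n
    simp only [unweight_wt, Nat.cast_one, one_pow, one_mul] at hyp
    have hyp' : iteratedDerivWithin n (h e₁) (G.unweight.IccE e₁) 0
        = (-1:ℝ) ^ n * iteratedDerivWithin n (h e₂) (G.unweight.IccE e₂) 0 := by
      linear_combination hyp
    show (G.wt e₁ : ℝ) ^ n * iteratedDerivWithin n
          (fun x => (G.wt e₁ : ℝ) ^ 2 * (((G.wt e₁ : ℝ)⁻¹) ^ 2 * h e₁ ((G.wt e₁ : ℝ)⁻¹ * x)))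
          (G.IccE e₁) 0
      = (-1:ℝ) ^ n * (G.wt e₂ : ℝ) ^ n * iteratedDerivWithin n
          (fun x => (G.wt e₂ : ℝ) ^ 2 * (((G.wt e₂ : ℝ)⁻¹) ^ 2 * h e₂ ((G.wt e₂ : ℝ)⁻¹ * x)))
          (G.IccE e₂) 0
    have s1 : iteratedDerivWithin n
          (fun x => (G.wt e₁ : ℝ) ^ 2 * (((G.wt e₁ : ℝ)⁻¹) ^ 2 * h e₁ ((G.wt e₁ : ℝ)⁻¹ * x)))
          (G.IccE e₁) 0
        = (G.wt e₁ : ℝ) ^ 2 * ((G.wt e₁ : ℝ)⁻¹) ^ n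
          * (((G.wt e₁ : ℝ)⁻¹) ^ 2 * iteratedDerivWithin n (h e₁) (G.unweight.IccE e₁) 0) := by
      have base := iter_norm (f := fun y => ((G.wt e₁ : ℝ)⁻¹) ^ 2 * h e₁ y) (hc e₁) (hL' e₁)
        (hLL e₁) (contDiffOn_const.mul (h1 e₁)) ((G.wt e₁ : ℝ) ^ 2) n
      rw [iter_norm0 (unweight_len_pos G e₁) (h1 e₁) (((G.wt e₁ : ℝ)⁻¹) ^ 2) n] at base
      exact base
    have s2 : iteratedDerivWithin n
          (fun x => (G.wt e₂ : ℝ) ^ 2 * (((G.wt e₂ : ℝ)⁻¹) ^ 2 * h e₂ ((G.wt e₂ : ℝ)⁻¹ * x)))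
          (G.IccE e₂) 0
        = (G.wt e₂ : ℝ) ^ 2 * ((G.wt e₂ : ℝ)⁻¹) ^ n
          * (((G.wt e₂ : ℝ)⁻¹) ^ 2 * iteratedDerivWithin n (h e₂) (G.unweight.IccE e₂) 0) := by
      have base := iter_norm (f := fun y => ((G.wt e₂ : ℝ)⁻¹) ^ 2 * h e₂ y) (hc e₂) (hL' e₂)
        (hLL e₂) (contDiffOn_const.mul (h1 e₂)) ((G.wt e₂ : ℝ) ^ 2) n
      rw [iter_norm0 (unweight_len_pos G e₂) (h1 e₂) (((G.wt e₂ : ℝ)⁻¹) ^ 2) n] at base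
      exact base
    rw [s1, s2]
    have c1 := cancel_pow (wt_ne' G e₁) n
    have c2 := cancel_pow (wt_ne' G e₂) n
    have d1 := cancel_pow (wt_ne' G e₁) 2
    have d2 := cancel_pow (wt_ne' G e₂) 2
    have e1 : (G.wt e₁ : ℝ) ^ n * ((G.wt e₁ : ℝ) ^ 2 * ((G.wt e₁ : ℝ)⁻¹) ^ n
          * (((G.wt e₁ : ℝ)⁻¹) ^ 2 * iteratedDerivWithin n (h e₁) (G.unweight.IccE e₁) 0))
        = ((G.wt e₁ : ℝ) ^ n * ((G.wt e₁ : ℝ)⁻¹) ^ n)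
          * ((G.wt e₁ : ℝ) ^ 2 * ((G.wt e₁ : ℝ)⁻¹) ^ 2)
          * iteratedDerivWithin n (h e₁) (G.unweight.IccE e₁) 0 := by ring
    have e2 : (-1:ℝ) ^ n * (G.wt e₂ : ℝ) ^ n * ((G.wt e₂ : ℝ) ^ 2 * ((G.wt e₂ : ℝ)⁻¹) ^ n
          * (((G.wt e₂ : ℝ)⁻¹) ^ 2 * iteratedDerivWithin n (h e₂) (G.unweight.IccE e₂) 0))
        = ((G.wt e₂ : ℝ) ^ n * ((G.wt e₂ : ℝ)⁻¹) ^ n)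
          * ((G.wt e₂ : ℝ) ^ 2 * ((G.wt e₂ : ℝ)⁻¹) ^ 2)
          * ((-1:ℝ) ^ n * iteratedDerivWithin n (h e₂) (G.unweight.IccE e₂) 0) := by ring
    rw [e1, e2, c1, d1, c2, d2]
    simp only [one_mul]
    exact hyp'


lemma nu00_inv00 (H : Coeff0 G.unweight) : nu00 G (inv00 G H) = H := by
  have h1 : (nu00 G (inv00 G H)).1 = H.1 := by
    funext e x
    show H.1 e ((G.wt e : ℝ)⁻¹ * ((G.wt e : ℝ) * x)) = H.1 e x
    rw [inv_mul_cancel_left₀ (wt_ne' G e)]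
  exact Prod.ext h1 rfl

lemma inv00_nu00 (F : Coeff0 G) : inv00 G (nu00 G F) = F := by
  have h1 : (inv00 G (nu00 G F)).1 = F.1 := by
    funext e x
    show F.1 e ((G.wt e : ℝ) * ((G.wt e : ℝ)⁻¹ * x)) = F.1 e x
    rw [mul_inv_cancel_left₀ (wt_ne' G e)]
  exact Prod.ext h1 rfl

lemma nu1_inv1 (h : Coeff G.unweight) : nu1 G (inv1 G h) = h := by
  funext e x
  show (G.wt e : ℝ) * ((G.wt e : ℝ)⁻¹ * h e ((G.wt e : ℝ)⁻¹ * ((G.wt e : ℝ) * x))) = h e x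
  rw [inv_mul_cancel_left₀ (wt_ne' G e), mul_inv_cancel_left₀ (wt_ne' G e)]

lemma inv1_nu1 (f : Coeff G) : inv1 G (nu1 G f) = f := by
  funext e x
  show (G.wt e : ℝ)⁻¹ * ((G.wt e : ℝ) * f e ((G.wt e : ℝ) * ((G.wt e : ℝ)⁻¹ * x))) = f e x
  rw [mul_inv_cancel_left₀ (wt_ne' G e), inv_mul_cancel_left₀ (wt_ne' G e)]

lemma nu11_inv11 (h : Coeff G.unweight) : nu11 G (inv11 G h) = h := by
  funext e x
  show (G.wt e : ℝ) ^ 2 * (((G.wt e : ℝ)⁻¹) ^ 2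
      * h e ((G.wt e : ℝ)⁻¹ * ((G.wt e : ℝ) * x))) = h e x
  rw [inv_mul_cancel_left₀ (wt_ne' G e), ← mul_assoc, cancel_pow (wt_ne' G e) 2, one_mul]

lemma inv11_nu11 (f : Coeff G) : inv11 G (nu11 G f) = f := by
  funext e x
  show ((G.wt e : ℝ)⁻¹) ^ 2 * ((G.wt e : ℝ) ^ 2
      * f e ((G.wt e : ℝ) * ((G.wt e : ℝ)⁻¹ * x))) = f e x
  rw [mul_inv_cancel_left₀ (wt_ne' G e), ← mul_assoc, mul_comm (((G.wt e : ℝ)⁻¹) ^ 2),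
    cancel_pow (wt_ne' G e) 2, one_mul]


end Membership

/-! **Statement 3.**  Let `(Σ, ∂Σ)` be a weighted metric graph with boundary and `Σ₀`
its unweighting.  The maps `ν*(f) = f` on `A^{0,0}`, `ν*(f_e d't_e) = (w(e) f_e d't_{0,e})`,
`ν*(f_e d''t_e) = (w(e) f_e d''t_{0,e})`, `ν*(f_e d't_e d''t_e) = (w(e)² f_e d't_{0,e} d''t_{0,e})`
define an isomorphism of differential bigraded ℝ-algebras
`ν* : A^{•,•}(Σ,∂Σ) → A^{•,•}(Σ₀,∂Σ₀)`: in each bidegree `ν*` is a bijection between the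
spaces of smooth forms, it is ℝ-linear, compatible with all products (the product on
functions, the module action of functions on forms, the wedge product
`A^{1,0} × A^{0,1} → A^{1,1}`), and it commutes with `d'` and `d''`. -/
theorem unweighting_isomorphism (G : WMG) :
    Set.BijOn (nu00 G) {F | G.IsA00 F} {F | G.unweight.IsA00 F} ∧
    Set.BijOn (nu1 G) {f | G.IsA1 f} {f | G.unweight.IsA1 f} ∧
    Set.BijOn (nu11 G) {f | G.IsA11 f} {f | G.unweight.IsA11 f} ∧
    (∀ F F' : Coeff0 G, nu00 G (F + F') = nu00 G F + nu00 G F') ∧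
    (∀ (c : ℝ) (F : Coeff0 G), nu00 G (c • F) = c • nu00 G F) ∧
    (∀ f f' : Coeff G, nu1 G (f + f') = nu1 G f + nu1 G f') ∧
    (∀ (c : ℝ) (f : Coeff G), nu1 G (c • f) = c • nu1 G f) ∧
    (∀ f f' : Coeff G, nu11 G (f + f') = nu11 G f + nu11 G f') ∧
    (∀ (c : ℝ) (f : Coeff G), nu11 G (c • f) = c • nu11 G f) ∧
    (∀ F F' : Coeff0 G, nu00 G (mul00 F F') = mul00 (nu00 G F) (nu00 G F')) ∧
    (∀ (F : Coeff0 G) (f : Coeff G), nu1 G (smul00 F f) = smul00 (nu00 G F) (nu1 G f)) ∧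
    (∀ (F : Coeff0 G) (f : Coeff G), nu11 G (smul00 F f) = smul00 (nu00 G F) (nu11 G f)) ∧
    (∀ f g : Coeff G, nu11 G (wedge f g) = wedge (nu1 G f) (nu1 G g)) ∧
    (∀ F : Coeff0 G, G.IsA00 F → nu1 G (dd0 G F) = dd0 G.unweight (nu00 G F)) ∧
    (∀ f : Coeff G, G.IsA1 f → nu11 G (dd10 G f) = dd10 G.unweight (nu1 G f)) ∧
    (∀ f : Coeff G, G.IsA1 f → nu11 G (dd01 G f) = dd01 G.unweight (nu1 G f)) := by
  classical
  have hc : ∀ e : G.E, (0:ℝ) < (G.wt e : ℝ) := wt_pos' G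
  have hL' : ∀ e : G.E, 0 < G.unweight.len e := unweight_len_pos G
  have hLL : ∀ e : G.E, G.len e = (G.wt e : ℝ) * G.unweight.len e := key G
  refine ⟨⟨fun F hF => nu00_mem G hF, ?_, ?_⟩, ⟨fun f hf => nu1_mem G hf, ?_, ?_⟩,
    ⟨fun f hf => nu11_mem G hf, ?_, ?_⟩, ?_, ?_, ?_, ?_, ?_, ?_, ?_, ?_, ?_, ?_, ?_, ?_, ?_⟩
  · intro F _ F' _ hEq
    have := congrArg (inv00 G) hEq
    rwa [inv00_nu00, inv00_nu00] at this
  · intro H hH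
    exact ⟨inv00 G H, inv00_mem G hH, nu00_inv00 G H⟩
  · intro f _ f' _ hEq
    have := congrArg (inv1 G) hEq
    rwa [inv1_nu1, inv1_nu1] at this
  · intro h hh
    exact ⟨inv1 G h, inv1_mem G hh, nu1_inv1 G h⟩
  · intro f _ f' _ hEq
    have := congrArg (inv11 G) hEq
    rwa [inv11_nu11, inv11_nu11] at this
  · intro h hh
    exact ⟨inv11 G h, inv11_mem G hh, nu11_inv11 G h⟩
  · intro F F'; rfl
  · intro c F; rfl
  · intro f f'
    funext e x
    show (G.wt e : ℝ) * (f e ((G.wt e : ℝ) * x) + f' e ((G.wt e : ℝ) * x)) = _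
    exact mul_add _ _ _
  · intro c f
    funext e x
    show (G.wt e : ℝ) * (c * f e ((G.wt e : ℝ) * x)) = c * ((G.wt e : ℝ) * f e ((G.wt e : ℝ) * x))
    ring
  · intro f f'
    funext e x
    show (G.wt e : ℝ) ^ 2 * (f e ((G.wt e : ℝ) * x) + f' e ((G.wt e : ℝ) * x)) = _
    exact mul_add _ _ _
  · intro c f
    funext e x
    show (G.wt e : ℝ) ^ 2 * (c * f e ((G.wt e : ℝ) * x))
      = c * ((G.wt e : ℝ) ^ 2 * f e ((G.wt e : ℝ) * x))
    ring
  · intro F F'; rfl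
  · intro F f
    funext e x
    show (G.wt e : ℝ) * (F.1 e ((G.wt e : ℝ) * x) * f e ((G.wt e : ℝ) * x))
      = F.1 e ((G.wt e : ℝ) * x) * ((G.wt e : ℝ) * f e ((G.wt e : ℝ) * x))
    ring
  · intro F f
    funext e x
    show (G.wt e : ℝ) ^ 2 * (F.1 e ((G.wt e : ℝ) * x) * f e ((G.wt e : ℝ) * x))
      = F.1 e ((G.wt e : ℝ) * x) * ((G.wt e : ℝ) ^ 2 * f e ((G.wt e : ℝ) * x))
    ring
  · intro f g
    funext e x
    show (G.wt e : ℝ) ^ 2 * (f e ((G.wt e : ℝ) * x) * g e ((G.wt e : ℝ) * x))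
      = ((G.wt e : ℝ) * f e ((G.wt e : ℝ) * x)) * ((G.wt e : ℝ) * g e ((G.wt e : ℝ) * x))
    ring
  · intro F hF
    funext e x
    show (G.wt e : ℝ) * (if (G.wt e : ℝ) * x ∈ G.IccE e
          then derivWithin (F.1 e) (G.IccE e) ((G.wt e : ℝ) * x) else 0)
      = if x ∈ G.unweight.IccE e
          then derivWithin (fun y => F.1 e ((G.wt e : ℝ) * y)) (G.unweight.IccE e) x else 0
    by_cases hx : x ∈ G.unweight.IccE e
    · rw [if_pos hx, if_pos ((mem_scale_iff (hc e) (hLL e)).2 hx),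
        derivWithin_scale (hc e) (hL' e) (hLL e) ((hF.1 e).differentiableOn (by simp)) hx]
    · rw [if_neg hx, if_neg (fun hm => hx ((mem_scale_iff (hc e) (hLL e)).1 hm)), mul_zero]
  · intro f hf
    funext e x
    show (G.wt e : ℝ) ^ 2 * (if (G.wt e : ℝ) * x ∈ G.IccE e
          then -derivWithin (f e) (G.IccE e) ((G.wt e : ℝ) * x) else 0)
      = if x ∈ G.unweight.IccE e
          then -derivWithin (fun y => (G.wt e : ℝ) * f e ((G.wt e : ℝ) * y))
            (G.unweight.IccE e) x else 0
    by_cases hx : x ∈ G.unweight.IccE e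
    · rw [if_pos hx, if_pos ((mem_scale_iff (hc e) (hLL e)).2 hx),
        derivWithin_const_mul _
          ((contDiffOn_scale (hc e) (hLL e) (hf.1 e)).differentiableOn (by simp) x hx),
        derivWithin_scale (hc e) (hL' e) (hLL e) ((hf.1 e).differentiableOn (by simp)) hx]
      ring
    · rw [if_neg hx, if_neg (fun hm => hx ((mem_scale_iff (hc e) (hLL e)).1 hm)), mul_zero]
  · intro f hf
    funext e x
    show (G.wt e : ℝ) ^ 2 * (if (G.wt e : ℝ) * x ∈ G.IccE e
          then derivWithin (f e) (G.IccE e) ((G.wt e : ℝ) * x) else 0)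
      = if x ∈ G.unweight.IccE e
          then derivWithin (fun y => (G.wt e : ℝ) * f e ((G.wt e : ℝ) * y))
            (G.unweight.IccE e) x else 0
    by_cases hx : x ∈ G.unweight.IccE e
    · rw [if_pos hx, if_pos ((mem_scale_iff (hc e) (hLL e)).2 hx),
        derivWithin_const_mul _
          ((contDiffOn_scale (hc e) (hLL e) (hf.1 e)).differentiableOn (by simp) x hx),
        derivWithin_scale (hc e) (hL' e) (hLL e) ((hf.1 e).differentiableOn (by simp)) hx]
      ring
    · rw [if_neg hx, if_neg (fun hm => hx ((mem_scale_iff (hc e) (hLL e)).1 hm)), mul_zero]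
end
end

section
/- Let (Σ,∂Σ) be a weighted metric graph with boundary and h:Σ→ℝⁿ a ℤ-harmonic tropicalization, with multiplicities m_σ on the edges σ of h(Σ) as defined below. Then the weighted one-dimensional polytopal complex Trop_h(Σ) is balanced at every point of h(Σ) that does not lie in h(∂Σ): at each such vertex u of h(Σ), Σ_σ m_σ·u_σ = 0, where the sum is over edges σ of h(Σ) adjacent to u and u_σ ∈ ℤⁿ is the primitive integral vector in the direction of σ emanating from u. -/
open scoped Classical

noncomputable section

/-! ## Harmonic tropicalizations -/

/-- A harmonic tropicalization `h = (h₁, …, h_n) : Σ → ℝⁿ` of `(Σ, ∂Σ)`: an `n`-tuple of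
harmonic functions, i.e. functions that are affine in the edge parameters (recorded by
their outgoing slopes on the oriented edges and their values at the vertices), and
satisfy the weighted balancing condition `∑_{e⁻ = v} w(e)·(dhᵢ/dt_e)(v) = 0` at every
interior vertex. -/
structure HTrop (G : WMG) (n : ℕ) where
  slope : G.E → Fin n → ℝ
  v0 : G.V → Fin n → ℝ
  slope_rev : ∀ e, slope (G.rev e) = fun i => -slope e i
  compat : ∀ e i, v0 (G.head e) i = v0 (G.src e) i + slope e i * G.len e
  harm : ∀ v : G.V, v ∉ G.bdry → ∀ i, ∑ e ∈ G.outE v, (G.wt e : ℝ) * slope e i = 0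

namespace HTrop

variable {G : WMG} {n : ℕ}

/-- The value `h(t_e(x)) ∈ ℝⁿ` of the tropicalization at the point of parameter `x` on
the edge `e`. -/
def pt (h : HTrop G n) (e : G.E) (x : ℝ) : Fin n → ℝ :=
  fun i => h.v0 (G.src e) i + h.slope e i * x

end HTrop

/-! **Statement 18.**  Let `(Σ,∂Σ)` be a weighted metric graph with boundary and
`h : Σ → ℝⁿ` a ℤ-harmonic tropicalization (integer slopes, witnessed by `m`).  The
multiplicity of an edge `e` of `Σ` is `m_e = w(e)·gcd(a₁,…,a_n)` where `aᵢ ∈ ℤ` is the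
slope of `hᵢ` on `e`, and the multiplicity of an edge `σ` of `h(Σ)` is the sum of the
`m_e` over the edges `e` mapping onto `σ`.  Then `Trop_h(Σ)` is balanced at every point
`u` of `h(Σ)` not lying in `h(∂Σ)`: at each vertex `u` of `h(Σ)` (i.e. each point `u`
meeting the images of the non-constant edges only as an endpoint), one has
`∑_σ m_σ · u_σ = 0`, the sum being over the edges `σ` of `h(Σ)` adjacent to `u`, with
`u_σ ∈ ℤⁿ` the primitive integral vector in the direction of `σ` emanating from `u`.
Grouping each `m_σ` as the sum of the multiplicities of the edges of `Σ` lying over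
`σ`, the balancing condition reads: for each coordinate `i`,
`∑_e m_e · (prim_e)ᵢ = 0`, summing over the oriented edges `e` of `Σ` with nonzero
slope whose tail maps to `u`, where `prim_e = (m e)/gcd(m e)` is the primitive integral
direction vector of the image of `e`. -/
theorem tropicalization_is_balanced (G : WMG) (n : ℕ) (h : HTrop G n)
    (m : G.E → Fin n → ℤ) (hm : ∀ e i, h.slope e i = (m e i : ℝ))
    (u : Fin n → ℝ)
    (hu_bd : ∀ v ∈ G.bdry, h.v0 v ≠ u)
    (hu_vtx : ∀ e : G.E, h.slope e ≠ 0 →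
      ∀ x ∈ Set.Ioo (0 : ℝ) (G.len e), h.pt e x ≠ u) :
    ∀ i : Fin n,
      ∑ e ∈ Finset.univ.filter (fun e : G.E => h.slope e ≠ 0 ∧ h.v0 (G.src e) = u),
        ((G.wt e : ℝ) * ((Finset.univ.gcd fun j => (m e j).natAbs : ℕ) : ℝ)) *
          (((m e i / ((Finset.univ.gcd fun j => (m e j).natAbs : ℕ) : ℤ)) : ℤ) : ℝ)
        = 0 := by
  intro i
  set S := Finset.univ.filter (fun e : G.E => h.slope e ≠ 0 ∧ h.v0 (G.src e) = u) with hS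
  have hterm : ∀ e ∈ S,
      ((G.wt e : ℝ) * ((Finset.univ.gcd fun j => (m e j).natAbs : ℕ) : ℝ)) *
          (((m e i / ((Finset.univ.gcd fun j => (m e j).natAbs : ℕ) : ℤ)) : ℤ) : ℝ)
        = (G.wt e : ℝ) * (m e i : ℝ) := by
    intro e he
    simp only [hS, Finset.mem_filter] at he
    obtain ⟨-, hne, -⟩ := he
    set g : ℕ := Finset.univ.gcd fun j => (m e j).natAbs with hg
    have hdvd : (g : ℤ) ∣ m e i := by
      have h1 : g ∣ (m e i).natAbs := Finset.gcd_dvd (Finset.mem_univ i)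
      exact Int.dvd_natAbs.mp (Int.natCast_dvd_natCast.mpr h1)
    have hmul : (g : ℤ) * (m e i / (g : ℤ)) = m e i := Int.mul_ediv_cancel' hdvd
    have : ((g : ℤ) : ℝ) * ((m e i / (g : ℤ) : ℤ) : ℝ) = (m e i : ℝ) := by
      rw [← Int.cast_mul, hmul]
    push_cast at this ⊢
    rw [mul_assoc, this]
  rw [Finset.sum_congr rfl hterm]
  have hmap : ∀ e ∈ S, G.src e ∈ (Finset.univ : Finset G.V) := fun e _ => Finset.mem_univ _
  rw [← Finset.sum_fiberwise_of_maps_to hmap]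
  apply Finset.sum_eq_zero
  intro v _
  by_cases hv : h.v0 v = u
  · have hvb : v ∉ G.bdry := fun hb => hu_bd v hb hv
    have h0 := h.harm v hvb i
    rw [WMG.outE] at h0
    calc ∑ e ∈ S.filter (fun e => G.src e = v), (G.wt e : ℝ) * (m e i : ℝ)
        = ∑ e ∈ Finset.univ.filter (fun e => G.src e = v),
            (G.wt e : ℝ) * h.slope e i := by
          rw [hS, Finset.filter_filter, Finset.sum_filter, Finset.sum_filter]
          refine Finset.sum_congr rfl fun e _ => ?_
          by_cases hsv : G.src e = v
          · by_cases hsl : h.slope e = 0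
            · have h1 : h.slope e i = 0 := by rw [hsl]; rfl
              have h2 : (m e i : ℝ) = 0 := by rw [← hm]; exact h1
              simp [hsv, hsl, h1, h2]
            · have : (m e i : ℝ) = h.slope e i := (hm e i).symm
              simp [hsv, hsl, hv, this]
          · simp [hsv]
      _ = 0 := h0
  · apply Finset.sum_eq_zero
    intro e he
    simp only [hS, Finset.filter_filter, Finset.mem_filter] at he
    exact absurd (by rw [← he.2.2]; exact he.2.1.2 : h.v0 v = u) hv
end
end

section
/- Let (Σ,∂Σ) be a weighted metric graph with boundary, h:Σ→ℝⁿ a ℤ-harmonic tropicalization, and U⊆ℝⁿ an open neighborhood of h(Σ). Then (1) for every Lagerberg form η∈A^{1,1}(U) one has ∫_{Trop_h(Σ)} η = ∫_Σ h*η, and (2) for every η∈A^{1,0}(U) one has ∫_{∂Trop_h(Σ)} η = ∫_{∂Σ} h*η, and likewise for every η∈A^{0,1}(U). -/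
open scoped Classical

noncomputable section

/-! ## Lagerberg forms on (open subsets of) `ℝⁿ` and their pullback to graphs -/

/-- Coefficients of a Lagerberg `(0,0)`-form on `ℝⁿ` (a function). -/
abbrev L00 (n : ℕ) := (Fin n → ℝ) → ℝ
/-- Coefficients of a Lagerberg `(1,0)`-form `∑ᵢ gᵢ d'xᵢ` (or `(0,1)`-form `∑ᵢ gᵢ d''xᵢ`). -/
abbrev L10 (n : ℕ) := Fin n → (Fin n → ℝ) → ℝ
/-- Coefficients of a Lagerberg `(1,1)`-form `∑_{i,j} g_{ij} d'xᵢ ∧ d''x_j`. -/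
abbrev L11 (n : ℕ) := Fin n → Fin n → (Fin n → ℝ) → ℝ

namespace HTrop

variable {G : WMG} {n : ℕ}

/-- Pullback `h*g = g ∘ h` of a function along a harmonic tropicalization. -/
def pb00 (h : HTrop G n) (g : L00 n) : Coeff0 G :=
  (fun e x => if x ∈ G.IccE e then g (h.pt e x) else 0, fun v => g (h.v0 v))

/-- Pullback `h*(∑ᵢ gᵢ d'xᵢ) = (f_e d't_e)` with `f_e = ∑ᵢ (dhᵢ/dt_e)·(gᵢ ∘ h)`
(and similarly for `(0,1)`-forms). -/
def pb10 (h : HTrop G n) (g : L10 n) : Coeff G :=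
  fun e x => if x ∈ G.IccE e then ∑ i, h.slope e i * g i (h.pt e x) else 0

/-- Pullback `h*(∑_{i,j} g_{ij} d'xᵢ∧d''x_j) = (f_e d't_e d''t_e)` with
`f_e = ∑_{i,j} (dhᵢ/dt_e)(dh_j/dt_e)·(g_{ij} ∘ h)`. -/
def pb11 (h : HTrop G n) (g : L11 n) : Coeff G :=
  fun e x => if x ∈ G.IccE e then
    ∑ i, ∑ j, h.slope e i * h.slope e j * g i j (h.pt e x) else 0

end HTrop

/-- `d''g = ∑ᵢ (∂g/∂xᵢ) d''xᵢ` (with the same coefficients, `d'g = ∑ᵢ (∂g/∂xᵢ) d'xᵢ`). -/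
def dL00 {n : ℕ} (g : L00 n) : L10 n :=
  fun i y => fderiv ℝ g y (Pi.single i 1)

/-- `d''(∑ᵢ gᵢ d'xᵢ) = ∑_{i,j} (-(∂gᵢ/∂x_j)) d'xᵢ ∧ d''x_j`. -/
def dL10'' {n : ℕ} (g : L10 n) : L11 n :=
  fun i j y => -(fderiv ℝ (g i) y (Pi.single j 1))

/-- `d'(∑_j g_j d''x_j) = ∑_{i,j} (∂g_j/∂xᵢ) d'xᵢ ∧ d''x_j`. -/
def dL01' {n : ℕ} (g : L10 n) : L11 n :=
  fun i j y => fderiv ℝ (g j) y (Pi.single i 1)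

/-- Wedge product `(∑ᵢ gᵢ d'xᵢ) ∧ (∑_j g'_j d''x_j) = ∑_{i,j} gᵢ g'_j d'xᵢ ∧ d''x_j`. -/
def wedgeL {n : ℕ} (g g' : L10 n) : L11 n :=
  fun i j y => g i y * g' j y

/-- The combinatorial data of the weighted polytopal complex `Trop_h(Σ)` associated to
a ℤ-harmonic tropicalization `h : Σ → ℝⁿ` (after subdividing so that every edge of `Σ`
maps onto an edge of `h(Σ)` or a vertex): a finite set `S` of *oriented* edges `σ` of
`h(Σ)` with orientation reversal `revS`, starting point `start σ`, primitive integral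
direction vector `bvec σ`, and lattice length `llen σ` (so that the endpoints of `σ`
differ by `llen σ • bvec σ`), together with the assignment sending each oriented edge
of `Σ` with nonzero slope onto an oriented edge of `h(Σ)`. -/
structure TropData (G : WMG) (n : ℕ) (h : HTrop G n) where
  S : Type
  fintS : Fintype S
  decS : DecidableEq S
  revS : S → S
  revS_invol : ∀ σ, revS (revS σ) = σ
  start : S → Fin n → ℝ
  bvec : S → Fin n → ℤ
  llen : S → ℝ
  llen_pos : ∀ σ, 0 < llen σ
  bvec_prim : ∀ σ, (Finset.univ.gcd fun i => (bvec σ i).natAbs) = 1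
  bvec_rev : ∀ σ i, bvec (revS σ) i = -(bvec σ i)
  start_rev : ∀ σ i, start (revS σ) i = start σ i + llen σ * (bvec σ i : ℝ)
  llen_rev : ∀ σ, llen (revS σ) = llen σ
  assign : G.E → Option S
  assign_none : ∀ e, assign e = none ↔ h.slope e = 0
  assign_rev : ∀ e, assign (G.rev e) = Option.map revS (assign e)
  assign_start : ∀ e σ, assign e = some σ → ∀ i, h.pt e 0 i = start σ i
  assign_end : ∀ e σ, assign e = some σ →
    ∀ i, h.pt e (G.len e) i = start σ i + llen σ * (bvec σ i : ℝ)

attribute [instance] TropData.fintS TropData.decS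

namespace TropData

variable {G : WMG} {n : ℕ} {h : HTrop G n}

/-- The multiplicity `m_σ = ∑_{e ↦ σ} m_e` of an edge `σ` of `Trop_h(Σ)`, where
`m_e = w(e)·gcd(a₁,…,a_n)` with `aᵢ ∈ ℤ` the slope of `hᵢ` on `e` (witnessed by `m`). -/
def mult (T : TropData G n h) (m : G.E → Fin n → ℤ) (σ : T.S) : ℝ :=
  ∑ e ∈ Finset.univ.filter (fun e : G.E => T.assign e = some σ),
    (G.wt e : ℝ) * ((Finset.univ.gcd fun j => (m e j).natAbs : ℕ) : ℝ)

/-- `∫_{Trop_h(Σ)} (∑ g_{ij} d'xᵢ∧d''x_j) = ∑_σ m_σ ∫₀^{Lσ} ∑_{i,j} bᵢ b_j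
g_{ij}(start σ + t·b) dt` (sum over unoriented edges; here over oriented edges with a
factor 1/2). -/
def intTrop11 (T : TropData G n h) (m : G.E → Fin n → ℤ) (g : L11 n) : ℝ :=
  (1 / 2) * ∑ σ : T.S, T.mult m σ *
    ∫ t in (0 : ℝ)..(T.llen σ),
      ∑ i, ∑ j, (T.bvec σ i : ℝ) * (T.bvec σ j : ℝ) *
        g i j (fun k => T.start σ k + t * (T.bvec σ k : ℝ))

/-- `∫_{∂Trop_h(Σ)} (∑ᵢ gᵢ d'xᵢ) = ∑_σ m_σ ∑ᵢ bᵢ (gᵢ(σ⁻) - gᵢ(σ⁺))` (sum over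
unoriented edges; here over oriented edges with a factor 1/2). -/
def intBdTrop10 (T : TropData G n h) (m : G.E → Fin n → ℤ) (g : L10 n) : ℝ :=
  (1 / 2) * ∑ σ : T.S, T.mult m σ *
    ∑ i, (T.bvec σ i : ℝ) *
      (g i (T.start σ) - g i (fun k => T.start σ k + T.llen σ * (T.bvec σ k : ℝ)))

/-- `∫_{∂Trop_h(Σ)} (∑ᵢ gᵢ d''xᵢ) = ∑_σ m_σ ∑ᵢ bᵢ (gᵢ(σ⁺) - gᵢ(σ⁻))`. -/
def intBdTrop01 (T : TropData G n h) (m : G.E → Fin n → ℤ) (g : L10 n) : ℝ :=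
  (1 / 2) * ∑ σ : T.S, T.mult m σ *
    ∑ i, (T.bvec σ i : ℝ) *
      (g i (fun k => T.start σ k + T.llen σ * (T.bvec σ k : ℝ)) - g i (T.start σ))

end TropData

lemma finset_gcd_bezout {ι : Type*} [DecidableEq ι] (s : Finset ι) (b : ι → ℤ) :
    ∃ u : ι → ℤ, ∑ i ∈ s, u i * b i = ((s.gcd fun i => (b i).natAbs : ℕ) : ℤ) := by
  induction s using Finset.induction_on with
  | empty => exact ⟨0, by simp⟩
  | @insert a s ha ih =>
    obtain ⟨u, hu⟩ := ih
    set g : ℤ := ((s.gcd fun i => (b i).natAbs : ℕ) : ℤ) with hg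
    refine ⟨fun i => if i = a then (b a).gcdA g else (b a).gcdB g * u i, ?_⟩
    rw [Finset.sum_insert ha]
    beta_reduce
    rw [if_pos rfl]
    have h1 : ∑ i ∈ s, (if i = a then (b a).gcdA g else (b a).gcdB g * u i) * b i
        = (b a).gcdB g * g := by
      rw [← hu, Finset.mul_sum]
      refine Finset.sum_congr rfl fun i hi => ?_
      rw [if_neg (by rintro rfl; exact ha hi)]; ring
    rw [h1]
    have h2 : (((insert a s).gcd fun i => (b i).natAbs : ℕ) : ℤ) = (Int.gcd (b a) g : ℤ) := by
      have hnat : ((insert a s).gcd fun i => (b i).natAbs) = Int.gcd (b a) g := by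
        rw [Finset.gcd_insert]
        show Nat.gcd _ _ = _
        simp [Int.gcd, hg]
      exact_mod_cast congrArg (Nat.cast : ℕ → ℤ) hnat
    rw [h2, Int.gcd_eq_gcd_ab]; ring

lemma TropData.key {G : WMG} {n : ℕ} {h : HTrop G n}
    (m : G.E → Fin n → ℤ) (hm : ∀ e i, h.slope e i = (m e i : ℝ))
    (T : TropData G n h) {e : G.E} {σ : T.S} (ha : T.assign e = some σ) :
    ∃ c : ℤ, 0 < c ∧ (∀ i, (m e i : ℝ) = (c : ℝ) * (T.bvec σ i : ℝ)) ∧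
      T.llen σ = (c : ℝ) * G.len e ∧
      (((Finset.univ.gcd fun j => (m e j).natAbs : ℕ) : ℝ)) = (c : ℝ) := by
  have hlpos := G.len_pos e
  have hLpos := T.llen_pos σ
  have hrel : ∀ i, (m e i : ℝ) * G.len e = T.llen σ * (T.bvec σ i : ℝ) := by
    intro i
    have h0 := T.assign_start e σ ha i
    have h1 := T.assign_end e σ ha i
    have h2 : h.pt e (G.len e) i - h.pt e 0 i = T.llen σ * (T.bvec σ i : ℝ) := by
      rw [h1, h0]; ring
    simp only [HTrop.pt] at h2
    rw [← hm e i]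
    linarith [h2]
  obtain ⟨u, hu⟩ := finset_gcd_bezout Finset.univ (T.bvec σ)
  rw [T.bvec_prim σ] at hu
  set c : ℤ := ∑ i, u i * m e i with hc
  have hcl : (c : ℝ) * G.len e = T.llen σ := by
    have key : ((∑ i, u i * m e i : ℤ) : ℝ) * G.len e
        = T.llen σ * ((∑ i, u i * T.bvec σ i : ℤ) : ℝ) := by
      push_cast
      rw [Finset.sum_mul, Finset.mul_sum]
      refine Finset.sum_congr rfl fun i _ => ?_
      have hi := hrel i
      calc ((u i : ℝ) * (m e i : ℝ)) * G.len e
          = (u i : ℝ) * ((m e i : ℝ) * G.len e) := by ring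
        _ = (u i : ℝ) * (T.llen σ * (T.bvec σ i : ℝ)) := by rw [hi]
        _ = T.llen σ * ((u i : ℝ) * (T.bvec σ i : ℝ)) := by ring
    rw [hu] at key
    rw [hc]; push_cast
    simpa using key
  have hcpos : 0 < c := by
    have : (0 : ℝ) < (c : ℝ) := by
      have := hcl
      nlinarith
    exact_mod_cast this
  have hcmR : ∀ i, (m e i : ℝ) = (c : ℝ) * (T.bvec σ i : ℝ) := by
    intro i
    have h1 : (m e i : ℝ) * G.len e = ((c : ℝ) * (T.bvec σ i : ℝ)) * G.len e := by
      rw [hrel i, ← hcl]; ring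
    exact mul_right_cancel₀ (ne_of_gt hlpos) h1
  have hcmZ : ∀ i, m e i = c * T.bvec σ i := by
    intro i
    exact_mod_cast hcmR i
  refine ⟨c, hcpos, hcmR, by rw [← hcl], ?_⟩
  have hgcd : (Finset.univ.gcd fun j => (m e j).natAbs) = c.natAbs := by
    have h1 : (Finset.univ.gcd fun j => (m e j).natAbs)
        = Finset.univ.gcd fun j => c.natAbs * (T.bvec σ j).natAbs := by
      apply Finset.gcd_congr rfl
      intro j _
      rw [hcmZ j, Int.natAbs_mul]
    rw [h1, Finset.gcd_mul_left, T.bvec_prim σ]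
    simp
  rw [hgcd]
  rw [Nat.cast_natAbs]
  rw [abs_of_pos (by exact_mod_cast hcpos)]

lemma sum_swap_assign {S E : Type} [Fintype S] [Fintype E] [DecidableEq S]
    (assign : E → Option S) (F : E → ℝ) (c : E → ℝ) (I : S → ℝ)
    (h0 : ∀ e, assign e = none → F e = 0)
    (hs : ∀ e σ, assign e = some σ → F e = c e * I σ) :
    ∑ σ : S, (∑ e ∈ Finset.univ.filter (fun e => assign e = some σ), c e) * I σ
      = ∑ e : E, F e := by
  have h1 : ∀ σ : S, (∑ e ∈ Finset.univ.filter (fun e => assign e = some σ), c e) * I σ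
      = ∑ e : E, if assign e = some σ then c e * I σ else 0 := by
    intro σ
    rw [Finset.sum_mul, Finset.sum_filter]
  calc ∑ σ : S, (∑ e ∈ Finset.univ.filter (fun e => assign e = some σ), c e) * I σ
      = ∑ σ : S, ∑ e : E, if assign e = some σ then c e * I σ else 0 :=
        Finset.sum_congr rfl fun σ _ => h1 σ
    _ = ∑ e : E, ∑ σ : S, if assign e = some σ then c e * I σ else 0 := Finset.sum_comm
    _ = ∑ e : E, F e := by
        refine Finset.sum_congr rfl fun e _ => ?_
        match he : assign e with
        | none =>
          rw [h0 e he]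
          refine Finset.sum_eq_zero fun σ _ => if_neg (by simp [he])
        | some σ₀ =>
          rw [hs e σ₀ he, Finset.sum_eq_single σ₀]
          · simp
          · intro σ _ hne
            exact if_neg (by simp [he, Ne.symm hne])
          · intro hmem; exact absurd (Finset.mem_univ σ₀) hmem

namespace HTrop

variable {G : WMG} {n : ℕ}

lemma pt_rev (h : HTrop G n) (e : G.E) (x : ℝ) :
    h.pt (G.rev e) x = h.pt e (G.len e - x) := by
  funext i
  have hcomp := h.compat e i
  simp only [HTrop.pt]
  rw [show G.src (G.rev e) = G.head e from rfl, hcomp]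
  simp only [h.slope_rev]
  ring

lemma mem_Icc_rev (e : G.E) {x : ℝ} :
    x ∈ G.IccE (G.rev e) ↔ G.len e - x ∈ G.IccE e := by
  simp only [WMG.IccE, Set.mem_Icc, G.len_rev]
  constructor <;> (rintro ⟨h1, h2⟩; constructor <;> linarith)

lemma pb10_rev (h : HTrop G n) (g : L10 n) (e : G.E) (x : ℝ) :
    h.pb10 g (G.rev e) x = - h.pb10 g e (G.len e - x) := by
  simp only [HTrop.pb10]
  by_cases hx : x ∈ G.IccE (G.rev e)
  · rw [if_pos hx, if_pos ((mem_Icc_rev e).mp hx), h.pt_rev e x]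
    simp only [h.slope_rev]
    rw [← Finset.sum_neg_distrib]
    exact Finset.sum_congr rfl fun i _ => by ring
  · rw [if_neg hx, if_neg (fun hmem => hx ((mem_Icc_rev e).mpr hmem))]
    simp

lemma pb10_none (h : HTrop G n) {T : TropData G n h} (g : L10 n) {e : G.E}
    (he : T.assign e = none) : ∀ x, h.pb10 g e x = 0 := by
  intro x
  have hs0 : h.slope e = 0 := (T.assign_none e).mp he
  simp [HTrop.pb10, hs0]

lemma pb11_none (h : HTrop G n) {T : TropData G n h} (g : L11 n) {e : G.E}
    (he : T.assign e = none) : ∀ x, h.pb11 g e x = 0 := by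
  intro x
  have hs0 : h.slope e = 0 := (T.assign_none e).mp he
  simp [HTrop.pb11, hs0]

end HTrop

lemma part1_edge {G : WMG} {n : ℕ} {h : HTrop G n}
    (m : G.E → Fin n → ℤ) (hm : ∀ e i, h.slope e i = (m e i : ℝ))
    (T : TropData G n h) (g : L11 n) {e : G.E} {σ : T.S} (ha : T.assign e = some σ) :
    (G.wt e : ℝ) * ∫ x in (0:ℝ)..(G.len e), h.pb11 g e x
      = ((G.wt e : ℝ) * ((Finset.univ.gcd fun j => (m e j).natAbs : ℕ) : ℝ)) *
        ∫ t in (0:ℝ)..(T.llen σ), ∑ i, ∑ j, (T.bvec σ i : ℝ) * (T.bvec σ j : ℝ) *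
          g i j (fun k => T.start σ k + t * (T.bvec σ k : ℝ)) := by
  obtain ⟨c, hcpos, hcm, hcL, hcg⟩ := TropData.key m hm T ha
  have hc0 : (c : ℝ) ≠ 0 := by
    have : (0:ℝ) < (c:ℝ) := by exact_mod_cast hcpos
    exact ne_of_gt this
  have hstart : ∀ k, h.v0 (G.src e) k = T.start σ k := by
    intro k
    have := T.assign_start e σ ha k
    simpa [HTrop.pt] using this
  set Φ : ℝ → ℝ := fun t => ∑ i, ∑ j, (T.bvec σ i : ℝ) * (T.bvec σ j : ℝ) *
      g i j (fun k => T.start σ k + t * (T.bvec σ k : ℝ)) with hΦ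
  have hEq : Set.EqOn (h.pb11 g e) (fun x => (c:ℝ)^2 * Φ ((c:ℝ) * x))
      (Set.uIcc (0:ℝ) (G.len e)) := by
    intro x hx
    rw [Set.uIcc_of_le (le_of_lt (G.len_pos e))] at hx
    have hpt : h.pt e x = fun k => T.start σ k + (c:ℝ) * x * (T.bvec σ k : ℝ) := by
      funext k
      simp only [HTrop.pt]
      rw [hstart k, hm, hcm]
      ring
    simp only [HTrop.pb11, if_pos hx, hΦ, hpt]
    rw [Finset.mul_sum]
    refine Finset.sum_congr rfl fun i _ => ?_
    rw [Finset.mul_sum]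
    refine Finset.sum_congr rfl fun j _ => ?_
    rw [hm, hm, hcm i, hcm j]
    ring
  rw [intervalIntegral.integral_congr hEq, intervalIntegral.integral_const_mul,
    intervalIntegral.integral_comp_mul_left Φ hc0, mul_zero, smul_eq_mul, hcg,
    show (c:ℝ) * G.len e = T.llen σ from hcL.symm]
  field_simp

lemma part2_core {G : WMG} {n : ℕ} {h : HTrop G n}
    (m : G.E → Fin n → ℤ) (hm : ∀ e i, h.slope e i = (m e i : ℝ))
    (T : TropData G n h) (g : L10 n) :
    T.intBdTrop10 m g = ∑ v ∈ G.bdry, ∑ e ∈ G.outE v, (G.wt e : ℝ) * h.pb10 g e 0 := by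
  have h0mem : ∀ e : G.E, (0:ℝ) ∈ G.IccE e := fun e => ⟨le_refl 0, le_of_lt (G.len_pos e)⟩
  have step1 : ∑ σ : T.S, T.mult m σ * (∑ i, (T.bvec σ i : ℝ) *
        (g i (T.start σ) - g i (fun k => T.start σ k + T.llen σ * (T.bvec σ k : ℝ))))
      = ∑ e : G.E, ((G.wt e : ℝ) * h.pb10 g e 0 - (G.wt e : ℝ) * h.pb10 g e (G.len e)) := by
    unfold TropData.mult
    refine sum_swap_assign T.assign _ _ _ ?_ ?_
    · intro e he
      simp [h.pb10_none (T := T) g he]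
    · intro e σ ha
      obtain ⟨c, hcpos, hcm, hcL, hcg⟩ := TropData.key m hm T ha
      have hlmem : G.len e ∈ G.IccE e := ⟨le_of_lt (G.len_pos e), le_refl _⟩
      have hpt0 : h.pt e 0 = T.start σ := by
        funext k
        exact T.assign_start e σ ha k
      have hptl : h.pt e (G.len e) = fun k => T.start σ k + T.llen σ * (T.bvec σ k : ℝ) :=
        funext (T.assign_end e σ ha)
      simp only [HTrop.pb10, h0mem e, hlmem, if_true, hpt0, hptl, hcg]
      rw [← mul_sub, ← Finset.sum_sub_distrib, mul_assoc]
      congr 1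
      rw [Finset.mul_sum]
      refine Finset.sum_congr rfl fun i _ => ?_
      rw [hm, hcm i]
      ring
  have step2 : ∑ e : G.E, (G.wt e : ℝ) * h.pb10 g e (G.len e)
      = - ∑ e : G.E, (G.wt e : ℝ) * h.pb10 g e 0 := by
    rw [← Finset.sum_neg_distrib]
    refine Fintype.sum_bijective G.rev (Function.Involutive.bijective G.rev_rev) _ _ ?_
    intro e
    rw [G.wt_rev, h.pb10_rev g e 0, sub_zero]
    ring
  have step3 : T.intBdTrop10 m g = ∑ e : G.E, (G.wt e : ℝ) * h.pb10 g e 0 := by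
    unfold TropData.intBdTrop10
    rw [step1, Finset.sum_sub_distrib, step2]
    ring
  have step4 : ∑ e : G.E, (G.wt e : ℝ) * h.pb10 g e 0
      = ∑ v : G.V, ∑ e ∈ G.outE v, (G.wt e : ℝ) * h.pb10 g e 0 := by
    simp only [WMG.outE]
    exact (Finset.sum_fiberwise Finset.univ G.src (fun e => (G.wt e : ℝ) * h.pb10 g e 0)).symm
  have step5 : ∀ v ∈ (Finset.univ : Finset G.V), v ∉ G.bdry →
      ∑ e ∈ G.outE v, (G.wt e : ℝ) * h.pb10 g e 0 = 0 := by
    intro v _ hv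
    have hterm : ∀ e ∈ G.outE v, (G.wt e : ℝ) * h.pb10 g e 0
        = ∑ i, ((G.wt e : ℝ) * h.slope e i) * g i (h.v0 v) := by
      intro e he
      have hsrc : G.src e = v := by simpa [WMG.outE] using he
      have hpt : h.pt e 0 = h.v0 v := by
        funext i
        simp [HTrop.pt, hsrc]
      simp only [HTrop.pb10, h0mem e, if_true, hpt]
      rw [Finset.mul_sum]
      exact Finset.sum_congr rfl fun i _ => by ring
    rw [Finset.sum_congr rfl hterm, Finset.sum_comm]
    refine Finset.sum_eq_zero fun i _ => ?_
    rw [← Finset.sum_mul, h.harm v hv i, zero_mul]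
  rw [step3, step4]
  exact (Finset.sum_subset (Finset.subset_univ G.bdry) step5).symm
/-! **Statement 19.**  Let `(Σ,∂Σ)` be a weighted metric graph with boundary,
`h : Σ → ℝⁿ` a ℤ-harmonic tropicalization (integer slopes witnessed by `m`), and
`U ⊆ ℝⁿ` an open neighborhood of `h(Σ)`.  Then (1) for every Lagerberg form
`η ∈ A^{1,1}(U)` one has `∫_{Trop_h(Σ)} η = ∫_Σ h*η`; and (2) for every
`η ∈ A^{1,0}(U)` one has `∫_{∂Trop_h(Σ)} η = ∫_{∂Σ} h*η`, and likewise for every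
`η ∈ A^{0,1}(U)`. -/
theorem tropical_integration_compatibility (G : WMG) (n : ℕ) (h : HTrop G n)
    (m : G.E → Fin n → ℤ) (hm : ∀ e i, h.slope e i = (m e i : ℝ))
    (T : TropData G n h)
    (U : Set (Fin n → ℝ)) (hU : IsOpen U)
    (himg : ∀ e, ∀ x ∈ G.IccE e, h.pt e x ∈ U) (himgv : ∀ v, h.v0 v ∈ U) :
    (∀ g : L11 n, (∀ i j, ContDiffOn ℝ (⊤ : ℕ∞) (g i j) U) →
      T.intTrop11 m g = integ11 G (h.pb11 g)) ∧
    (∀ g : L10 n, (∀ i, ContDiffOn ℝ (⊤ : ℕ∞) (g i) U) →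
      T.intBdTrop10 m g = integBd10 G (h.pb10 g)) ∧
    (∀ g : L10 n, (∀ i, ContDiffOn ℝ (⊤ : ℕ∞) (g i) U) →
      T.intBdTrop01 m g = integBd01 G (h.pb10 g)) := by
  refine ⟨?_, ?_, ?_⟩
  · -- (1,1)-forms
    intro g _
    unfold TropData.intTrop11 integ11 TropData.mult
    congr 1
    refine sum_swap_assign T.assign
      (fun e => (G.wt e : ℝ) * ∫ x in (0:ℝ)..(G.len e), h.pb11 g e x)
      (fun e => (G.wt e : ℝ) * ((Finset.univ.gcd fun j => (m e j).natAbs : ℕ) : ℝ))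
      (fun σ => ∫ t in (0:ℝ)..(T.llen σ), ∑ i, ∑ j,
        (T.bvec σ i : ℝ) * (T.bvec σ j : ℝ) *
          g i j (fun k => T.start σ k + t * (T.bvec σ k : ℝ)))
      ?_ ?_
    · intro e he
      have hz : ∀ x : ℝ, h.pb11 g e x = 0 := h.pb11_none (T := T) g he
      simp [hz]
    · intro e σ ha
      exact part1_edge m hm T g ha
  · -- (1,0)-forms
    intro g _
    exact part2_core m hm T g
  · -- (0,1)-forms
    intro g _
    have inner : ∀ σ : T.S, (∑ i, (T.bvec σ i : ℝ) *
          (g i (fun k => T.start σ k + T.llen σ * (T.bvec σ k : ℝ)) - g i (T.start σ)))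
        = - ∑ i, (T.bvec σ i : ℝ) *
          (g i (T.start σ) - g i (fun k => T.start σ k + T.llen σ * (T.bvec σ k : ℝ))) := by
      intro σ
      rw [← Finset.sum_neg_distrib]
      exact Finset.sum_congr rfl fun i _ => by ring
    have h01 : T.intBdTrop01 m g = - T.intBdTrop10 m g := by
      unfold TropData.intBdTrop01 TropData.intBdTrop10
      simp_rw [inner]
      simp [mul_neg, Finset.sum_neg_distrib]
    rw [h01, part2_core m hm T g]
    unfold integBd01
    rw [← Finset.sum_neg_distrib]
    refine Finset.sum_congr rfl fun v _ => ?_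
    rw [← Finset.sum_neg_distrib]
    refine Finset.sum_nbij' G.rev G.rev ?_ ?_ ?_ ?_ ?_
    · intro e he
      have hsrc : G.src e = v := by simpa [WMG.outE] using he
      exact (show G.rev e ∈ G.inE v by
        exact Finset.mem_filter.mpr ⟨Finset.mem_univ _, by
          show G.src (G.rev (G.rev e)) = v
          rw [G.rev_rev]; exact hsrc⟩)
    · intro e he
      have hh : G.head e = v := by simpa [WMG.inE] using he
      simp only [WMG.outE, Finset.mem_filter, Finset.mem_univ, true_and]
      simpa [WMG.head] using hh
    · intro e _; exact G.rev_rev e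
    · intro e _; exact G.rev_rev e
    · intro e _
      rw [G.wt_rev, G.len_rev, h.pb10_rev g e (G.len e), sub_self]
      ring
end
end
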